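/- arXiv:2005.12388 — 8 statements merged into one kernel-verified Lean document; each statement's English description precedes it below -/
import Mathlib

section
/- For any nonnegative width tree (T, λ), the width satisfies 2·trunk(T,λ)² ≤ w(T,λ) ≤ 2·netextent(T,λ)². -/
open Finset

/-- A ditree: a directed graph whose underlying undirected graph is a tree. -/
structure Ditree (V : Type) [Fintype V] [DecidableEq V] where
  edges : Finset (V × V)
  irrefl : ∀ e ∈ edges, e.1 ≠ e.2
  antisymm : ∀ a b : V, (a, b) ∈ edges → (b, a) ∉ edges
  isTree : (SimpleGraph.fromRel fun a b => (a, b) ∈ edges).IsTree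

namespace Ditree

variable {V : Type} [Fintype V] [DecidableEq V] (T : Ditree V)

/-- Edges with head at `v`. -/
def incoming (v : V) : Finset (V × V) := T.edges.filter fun e => e.2 = v

/-- Edges with tail at `v`. -/
def outgoing (v : V) : Finset (V × V) := T.edges.filter fun e => e.1 = v

def inDeg (v : V) : ℕ := (T.incoming v).card

def outDeg (v : V) : ℕ := (T.outgoing v).card

/-- A source: no incoming edges. -/
def IsSource (v : V) : Prop := T.incoming v = ∅

/-- A sink: no outgoing edges. -/
def IsSink (v : V) : Prop := T.outgoing v = ∅

/-- Net extent of a labelling: sum over vertices minus sum over edges. -/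
def netextent (lv : V → ℤ) (le : V × V → ℤ) : ℤ :=
  (∑ v, lv v) - ∑ e ∈ T.edges, le e

/-- Width of a labelling. -/
def width (lv : V → ℤ) (le : V × V → ℤ) : ℤ :=
  2 * ((∑ v, (lv v) ^ 2) - ∑ e ∈ T.edges, (le e) ^ 2)

/-- Trunk: the maximum vertex label. -/
def trunk {V : Type} [Fintype V] (hV : Nonempty V) (lv : V → ℤ) : ℤ :=
  Finset.univ.sup' (Finset.univ_nonempty_iff.mpr hV) lv

/-- The width tree conditions: labels are ≥ -1, and each vertex label is at least the sum
of the nonnegative labels on its incoming edges and at least the sum of the nonnegative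
labels on its outgoing edges. -/
def IsWidthTree (lv : V → ℤ) (le : V × V → ℤ) : Prop :=
  (∀ v, -1 ≤ lv v) ∧ (∀ e ∈ T.edges, -1 ≤ le e) ∧
  (∀ v, (∑ e ∈ (T.incoming v).filter (fun e => 0 ≤ le e), le e) ≤ lv v) ∧
  (∀ v, (∑ e ∈ (T.outgoing v).filter (fun e => 0 ≤ le e), le e) ≤ lv v)

/-- All labels are ≥ 1. -/
def IsPositive (lv : V → ℤ) (le : V × V → ℤ) : Prop :=
  (∀ v, 1 ≤ lv v) ∧ ∀ e ∈ T.edges, 1 ≤ le e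

/-- All labels are ≥ 0. -/
def IsNonneg (lv : V → ℤ) (le : V × V → ℤ) : Prop :=
  (∀ v, 0 ≤ lv v) ∧ ∀ e ∈ T.edges, 0 ≤ le e

/-- A product edge: the sole incoming edge at its head (or sole outgoing edge at its tail)
whose label equals the label of that vertex. -/
def IsProductEdge (lv : V → ℤ) (le : V × V → ℤ) (e : V × V) : Prop :=
  e ∈ T.edges ∧
    ((T.incoming e.2 = {e} ∧ le e = lv e.2) ∨ (T.outgoing e.1 = {e} ∧ le e = lv e.1))

def Productless (lv : V → ℤ) (le : V × V → ℤ) : Prop :=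
  ∀ e, ¬ T.IsProductEdge lv le e

/-- A flow: a positive labelling satisfying the flow (conservation) constraints. -/
def IsFlow (Fv : V → ℤ) (Fe : V × V → ℤ) : Prop :=
  (∀ v, 1 ≤ Fv v) ∧ (∀ e ∈ T.edges, 1 ≤ Fe e) ∧
  (∀ v, T.IsSink v → Fv v = ∑ e ∈ T.incoming v, Fe e) ∧
  (∀ v, T.IsSource v → Fv v = ∑ e ∈ T.outgoing v, Fe e) ∧
  (∀ v, ¬ T.IsSource v → ¬ T.IsSink v →
    Fv v = (∑ e ∈ T.incoming v, Fe e) ∧ Fv v = ∑ e ∈ T.outgoing v, Fe e)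

/-- A strong source-sink cut: contains all sources, no sinks, and no edge enters it. -/
def IsCut (S : Finset V) : Prop :=
  (∀ v, T.IsSource v → v ∈ S) ∧ (∀ v ∈ S, ¬ T.IsSink v) ∧
  ∀ e ∈ T.edges, e.2 ∈ S → e.1 ∈ S

/-- The edges leaving a cut. -/
def cutEdges (S : Finset V) : Finset (V × V) :=
  T.edges.filter fun e => e.1 ∈ S ∧ e.2 ∉ S

/-- The size `|∂S|` of a cut. -/
def cutSize (S : Finset V) : ℕ := (T.cutEdges S).card

/-- The value of a flow on a cut. -/
def flowVal (Fe : V × V → ℤ) (S : Finset V) : ℤ := ∑ e ∈ T.cutEdges S, Fe e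

/-- The number of vertices with exactly one incoming edge. -/
def N2minus : ℕ := (univ.filter fun v => T.inDeg v = 1).card

/-- The number of vertices with exactly one outgoing edge. -/
def N2plus : ℕ := (univ.filter fun v => T.outDeg v = 1).card

end Ditree

private lemma stmt2_all_one {α : Type*} [DecidableEq α] (s : Finset α) (f : α → ℕ)
    (h1 : ∀ i ∈ s, 1 ≤ f i) (h2 : ∑ i ∈ s, f i ≤ s.card) : ∀ i ∈ s, f i = 1 := by
  intro i hi
  have h3 : ∑ j ∈ s.erase i, 1 ≤ ∑ j ∈ s.erase i, f j :=
    Finset.sum_le_sum fun j hj => h1 j (Finset.mem_of_mem_erase hj)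
  have h4 : f i + ∑ j ∈ s.erase i, f j = ∑ j ∈ s, f j := Finset.add_sum_erase s f hi
  have h5 : (s.erase i).card = s.card - 1 := Finset.card_erase_of_mem hi
  simp only [Finset.sum_const, smul_eq_mul, mul_one] at h3
  have h6 := h1 i hi
  have h7 : 1 ≤ s.card := Finset.card_pos.mpr ⟨i, hi⟩
  omega

set_option maxHeartbeats 1000000 in
/-- for a nonnegative width tree, 2·trunk² ≤ w ≤ 2·netextent². -/
theorem stmt2 {V : Type} [Fintype V] [DecidableEq V] (T : Ditree V)
    (hV : Nonempty V) (lv : V → ℤ) (le : V × V → ℤ)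
    (h : T.IsWidthTree lv le) (hn : T.IsNonneg lv le) :
    2 * (Ditree.trunk hV lv) ^ 2 ≤ T.width lv le ∧
    T.width lv le ≤ 2 * (T.netextent lv le) ^ 2 := by
  classical
  obtain ⟨hlv, hle, hin, hout⟩ := h
  obtain ⟨hlv0, hle0⟩ := hn
  set G := SimpleGraph.fromRel (fun a b => (a, b) ∈ T.edges) with hGdef
  have hT : G.IsTree := T.isTree
  have hconn : G.Connected := hT.isConnected
  -- edge labels are at most both endpoint labels
  have key : ∀ e ∈ T.edges, le e ≤ lv e.1 ∧ le e ≤ lv e.2 := by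
    intro e he
    constructor
    · refine _root_.le_trans ?_ (hout e.1)
      refine Finset.single_le_sum (fun i hi => ?_) ?_
      · exact (Finset.mem_filter.mp hi).2
      · simp [Ditree.outgoing, Finset.mem_filter, he, hle0 e he]
    · refine _root_.le_trans ?_ (hin e.2)
      refine Finset.single_le_sum (fun i hi => ?_) ?_
      · exact (Finset.mem_filter.mp hi).2
      · simp [Ditree.incoming, Finset.mem_filter, he, hle0 e he]
  -- edge count
  letI : Fintype G.edgeSet := Fintype.ofFinite _
  have hadj : ∀ a b : V, G.Adj a b ↔ a ≠ b ∧ ((a, b) ∈ T.edges ∨ (b, a) ∈ T.edges) := by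
    intro a b; rw [hGdef]; exact SimpleGraph.fromRel_adj _ a b
  have himg : T.edges.image (fun e => s(e.1, e.2)) = G.edgeFinset := by
    ext x
    induction x using Sym2.ind with
    | _ a b =>
      simp only [Finset.mem_image, SimpleGraph.mem_edgeFinset, SimpleGraph.mem_edgeSet]
      rw [hadj]
      constructor
      · rintro ⟨e, he, hex⟩
        rw [Sym2.eq_iff] at hex
        rcases hex with ⟨h1, h2⟩ | ⟨h1, h2⟩
        · exact ⟨h1 ▸ h2 ▸ T.irrefl e he, Or.inl (by rwa [← h1, ← h2, Prod.mk.eta])⟩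
        · exact ⟨h2 ▸ h1 ▸ (T.irrefl e he).symm, Or.inr (by rwa [← h1, ← h2, Prod.mk.eta])⟩
      · rintro ⟨hab, hmem | hmem⟩
        · exact ⟨(a, b), hmem, rfl⟩
        · exact ⟨(b, a), hmem, Sym2.eq_swap⟩
  have hinj : Set.InjOn (fun e : V × V => s(e.1, e.2)) T.edges := by
    intro e he f hf hef
    simp only [Sym2.eq_iff] at hef
    rcases hef with ⟨h1, h2⟩ | ⟨h1, h2⟩
    · exact Prod.ext h1 h2
    · exfalso
      have he' : (f.2, f.1) ∈ T.edges := by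
        have : e = (f.2, f.1) := Prod.ext h1 h2
        rwa [← this]
      have hf' : (f.1, f.2) ∈ T.edges := by rwa [Prod.mk.eta]
      exact T.antisymm f.1 f.2 hf' he'
  have hcardE : T.edges.card + 1 = Fintype.card V := by
    rw [← hT.card_edgeFinset, ← himg, Finset.card_image_of_injOn hinj]
  -- root and distance
  obtain ⟨r⟩ := id hV
  set d : V → ℕ := fun v => G.dist r v with hd
  have hdr : d r = 0 := SimpleGraph.dist_self
  have hd0 : ∀ v, d v = 0 → v = r := fun v hv => (hconn.dist_eq_zero_iff.mp hv).symm
  -- parent edges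
  set pe : V → Finset (V × V) := fun v =>
    T.edges.filter fun e => (e.1 = v ∧ d e.2 < d v) ∨ (e.2 = v ∧ d e.1 < d v) with hpe
  have hpe_sub : ∀ v, pe v ⊆ T.edges := fun v => Finset.filter_subset _ _
  have hpe_ne : ∀ v, v ≠ r → (pe v).Nonempty := by
    intro v hv
    obtain ⟨p, hp⟩ := hconn.exists_walk_length_eq_dist r v
    have hdv : 0 < d v := hconn.pos_dist_of_ne (fun hrv => hv hrv.symm)
    cases hq : p.reverse with
    | nil =>
      exfalso
      have := congrArg SimpleGraph.Walk.length hq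
      rw [SimpleGraph.Walk.length_reverse, hp] at this
      omega
    | @cons _ u _ ha q =>
      have hlen : q.length + 1 = d v := by
        have := congrArg SimpleGraph.Walk.length hq
        rw [SimpleGraph.Walk.length_reverse, hp, SimpleGraph.Walk.length_cons] at this
        simp only [hd]
        omega
      have hdu : d u < d v := by
        have h1 : G.dist u r ≤ q.length := SimpleGraph.dist_le q
        have h2 : d u = G.dist u r := SimpleGraph.dist_comm
        omega
      rw [hadj] at ha
      rcases ha.2 with hm | hm
      · exact ⟨(v, u), Finset.mem_filter.mpr ⟨hm, Or.inl ⟨rfl, hdu⟩⟩⟩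
      · exact ⟨(u, v), Finset.mem_filter.mpr ⟨hm, Or.inr ⟨rfl, hdu⟩⟩⟩
  have hpe_disj : ∀ v ∈ Finset.univ.erase r, ∀ w ∈ Finset.univ.erase r, v ≠ w →
      Disjoint (pe v) (pe w) := by
    intro v _ w _ hvw
    rw [Finset.disjoint_left]
    intro e hev hew
    have h1 := (Finset.mem_filter.mp hev).2
    have h2 := (Finset.mem_filter.mp hew).2
    rcases h1 with ⟨ha, hb⟩ | ⟨ha, hb⟩ <;> rcases h2 with ⟨hc, hd'⟩ | ⟨hc, hd'⟩ <;>
      first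
        | exact hvw (ha ▸ hc ▸ rfl)
        | (subst ha; subst hc; omega)
  have hbu_sub : (Finset.univ.erase r).biUnion pe ⊆ T.edges := by
    intro e he
    obtain ⟨v, _, hev⟩ := Finset.mem_biUnion.mp he
    exact hpe_sub v hev
  have hcard_bu : ((Finset.univ.erase r).biUnion pe).card = ∑ v ∈ Finset.univ.erase r, (pe v).card :=
    Finset.card_biUnion hpe_disj
  have hcard_erase : (Finset.univ.erase r).card = T.edges.card := by
    rw [Finset.card_erase_of_mem (Finset.mem_univ r), Finset.card_univ]
    omega
  have hsum_le : ∑ v ∈ Finset.univ.erase r, (pe v).card ≤ T.edges.card := by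
    rw [← hcard_bu]
    exact Finset.card_le_card hbu_sub
  have hpe1 : ∀ v ∈ Finset.univ.erase r, (pe v).card = 1 := by
    refine stmt2_all_one _ _ (fun v hv => ?_) (by rw [hcard_erase]; exact hsum_le)
    exact Finset.card_pos.mpr (hpe_ne v (Finset.ne_of_mem_erase hv))
  have hcover : (Finset.univ.erase r).biUnion pe = T.edges := by
    refine Finset.eq_of_subset_of_card_le hbu_sub ?_
    rw [hcard_bu]
    calc T.edges.card = ∑ v ∈ Finset.univ.erase r, 1 := by
            rw [Finset.sum_const, smul_eq_mul, mul_one, hcard_erase]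
      _ ≤ _ := Finset.sum_le_sum fun v hv => (hpe1 v hv).ge
  have hcover' : ∀ e ∈ T.edges, ∃ v, v ≠ r ∧ e ∈ pe v := by
    intro e he
    rw [← hcover] at he
    obtain ⟨v, hv, hev⟩ := Finset.mem_biUnion.mp he
    exact ⟨v, Finset.ne_of_mem_erase hv, hev⟩
  have hdiff : ∀ e ∈ T.edges, d e.1 ≠ d e.2 := by
    intro e he
    obtain ⟨v, _, hev⟩ := hcover' e he
    rcases (Finset.mem_filter.mp hev).2 with ⟨ha, hb⟩ | ⟨ha, hb⟩ <;> (subst ha; omega)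
  -- choose the parent edge
  have hsingle : ∀ v : V, ∃ e : V × V, v ≠ r → pe v = {e} := by
    intro v
    by_cases hv : v = r
    · exact ⟨(v, v), fun hc => absurd hv hc⟩
    · obtain ⟨a, ha⟩ := Finset.card_eq_one.mp (hpe1 v (Finset.mem_erase.mpr ⟨hv, Finset.mem_univ v⟩))
      exact ⟨a, fun _ => ha⟩
  choose ε hε using hsingle
  have hεmem : ∀ v, v ≠ r → ε v ∈ pe v := by
    intro v hv; rw [hε v hv]; exact Finset.mem_singleton_self _
  have hεE : ∀ v, v ≠ r → ε v ∈ T.edges := fun v hv => hpe_sub v (hεmem v hv)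
  have hεspec : ∀ v, v ≠ r →
      ((ε v).1 = v ∧ d (ε v).2 < d v) ∨ ((ε v).2 = v ∧ d (ε v).1 < d v) :=
    fun v hv => (Finset.mem_filter.mp (hεmem v hv)).2
  have hc0 : ∀ v, v ≠ r → 0 ≤ le (ε v) := fun v hv => hle0 _ (hεE v hv)
  have hc_le : ∀ v, v ≠ r → le (ε v) ≤ lv v := by
    intro v hv
    rcases hεspec v hv with ⟨ha, _⟩ | ⟨ha, _⟩
    · have h2 := (key _ (hεE v hv)).1; rwa [ha] at h2
    · have h2 := (key _ (hεE v hv)).2; rwa [ha] at h2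
  have hc_other : ∀ v, v ≠ r → ∃ u, d u < d v ∧ le (ε v) ≤ lv u := by
    intro v hv
    rcases hεspec v hv with ⟨_, hb⟩ | ⟨_, hb⟩
    · exact ⟨(ε v).2, hb, (key _ (hεE v hv)).2⟩
    · exact ⟨(ε v).1, hb, (key _ (hεE v hv)).1⟩
  -- the filtration
  set S : ℕ → Finset V := fun k => Finset.univ.filter fun v => d v < k with hS
  set Ed : ℕ → Finset (V × V) := fun k => T.edges.filter fun e => d e.1 < k ∧ d e.2 < k with hEd
  set N : ℕ → ℤ := fun k => (∑ v ∈ S k, lv v) - ∑ e ∈ Ed k, le e with hN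
  set Q : ℕ → ℤ := fun k => (∑ v ∈ S k, lv v ^ 2) - ∑ e ∈ Ed k, le e ^ 2 with hQ
  have main : ∀ k, (∀ v ∈ S k, lv v ≤ N k ∧ lv v ^ 2 ≤ Q k) ∧ Q k ≤ N k ^ 2 := by
    intro k
    induction k with
    | zero =>
      have hS0 : S 0 = ∅ := by simp [hS]
      have hE0 : Ed 0 = ∅ := by simp [hEd]
      refine ⟨fun v hv => by simp [hS0] at hv, ?_⟩
      simp [hN, hQ, hS0, hE0]
    | succ k ih =>
      obtain ⟨ihv, ihQ⟩ := ih
      -- the new level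
      set L : Finset V := Finset.univ.filter fun v => d v = k with hL
      have hSL : S (k + 1) = S k ∪ L := by
        ext v; simp only [hS, hL, Finset.mem_union, Finset.mem_filter, Finset.mem_univ, true_and]
        omega
      have hSLdisj : Disjoint (S k) L := by
        rw [Finset.disjoint_left]
        intro v hv hv'
        simp only [hS, hL, Finset.mem_filter, Finset.mem_univ, true_and] at hv hv'
        omega
      rcases Nat.eq_zero_or_pos k with hk0 | hkpos
      · -- base: S 1 = {r}, Ed 1 = ∅
        subst hk0
        have hS1 : S 1 = {r} := by
          ext v
          simp only [hS, Finset.mem_filter, Finset.mem_univ, true_and, Finset.mem_singleton]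
          constructor
          · intro hv; exact hd0 v (by omega)
          · intro hv; subst hv; omega
        have hE1 : Ed 1 = ∅ := by
          rw [Finset.eq_empty_iff_forall_notMem]
          intro e he
          obtain ⟨heE, h1, h2⟩ := Finset.mem_filter.mp he
          exact hdiff e heE (by omega)
        refine ⟨fun v hv => ?_, ?_⟩
        · rw [hS1, Finset.mem_singleton] at hv
          subst hv
          simp [hN, hQ, hS1, hE1]
        · simp [hN, hQ, hS1, hE1]
      · -- inductive step for k ≥ 1
        have hLner : ∀ v ∈ L, v ≠ r := by
          intro v hv
          simp only [hL, Finset.mem_filter, Finset.mem_univ, true_and] at hv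
          intro hvr; subst hvr; omega
        have hEdL : Ed (k + 1) = Ed k ∪ L.biUnion pe := by
          ext e
          simp only [Finset.mem_union, Finset.mem_biUnion]
          constructor
          · intro he
            obtain ⟨heE, h1, h2⟩ := Finset.mem_filter.mp he
            by_cases hcase : d e.1 < k ∧ d e.2 < k
            · exact Or.inl (Finset.mem_filter.mpr ⟨heE, hcase⟩)
            · right
              obtain ⟨v, hvr, hev⟩ := hcover' e heE
              refine ⟨v, ?_, hev⟩
              have hspec := (Finset.mem_filter.mp hev).2
              simp only [hL, Finset.mem_filter, Finset.mem_univ, true_and]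
              rcases hspec with ⟨ha, hb⟩ | ⟨ha, hb⟩ <;> (subst ha; omega)
          · intro he
            rcases he with he | ⟨v, hv, hev⟩
            · obtain ⟨heE, h1, h2⟩ := Finset.mem_filter.mp he
              exact Finset.mem_filter.mpr ⟨heE, by omega⟩
            · simp only [hL, Finset.mem_filter, Finset.mem_univ, true_and] at hv
              obtain ⟨heE, hspec⟩ := Finset.mem_filter.mp hev
              refine Finset.mem_filter.mpr ⟨heE, ?_⟩
              rcases hspec with ⟨ha, hb⟩ | ⟨ha, hb⟩ <;> (subst ha; omega)
        have hEdisj : Disjoint (Ed k) (L.biUnion pe) := by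
          rw [Finset.disjoint_left]
          intro e he he'
          obtain ⟨_, h1, h2⟩ := Finset.mem_filter.mp he
          obtain ⟨v, hv, hev⟩ := Finset.mem_biUnion.mp he'
          simp only [hL, Finset.mem_filter, Finset.mem_univ, true_and] at hv
          rcases (Finset.mem_filter.mp hev).2 with ⟨ha, _⟩ | ⟨ha, _⟩ <;> (subst ha; omega)
        have hLdisjpe : ∀ v ∈ L, ∀ w ∈ L, v ≠ w → Disjoint (pe v) (pe w) := by
          intro v hv w hw hvw
          exact hpe_disj v (Finset.mem_erase.mpr ⟨hLner v hv, Finset.mem_univ v⟩)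
            w (Finset.mem_erase.mpr ⟨hLner w hw, Finset.mem_univ w⟩) hvw
        -- sum decompositions
        have hsum_pe : ∀ f : V × V → ℤ, ∑ e ∈ L.biUnion pe, f e = ∑ v ∈ L, f (ε v) := by
          intro f
          rw [Finset.sum_biUnion hLdisjpe]
          refine Finset.sum_congr rfl fun v hv => ?_
          rw [hε v (hLner v hv), Finset.sum_singleton]
        have hNsucc : N (k + 1) = N k + ∑ v ∈ L, (lv v - le (ε v)) := by
          simp only [hN, hSL, hEdL]
          rw [Finset.sum_union hSLdisj, Finset.sum_union hEdisj, hsum_pe, Finset.sum_sub_distrib]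
          ring
        have hQsucc : Q (k + 1) = Q k + ∑ v ∈ L, (lv v ^ 2 - le (ε v) ^ 2) := by
          simp only [hQ, hSL, hEdL]
          rw [Finset.sum_union hSLdisj, Finset.sum_union hEdisj, hsum_pe, Finset.sum_sub_distrib]
          ring
        -- per-vertex facts on L
        have hfacts : ∀ v ∈ L, 0 ≤ le (ε v) ∧ le (ε v) ≤ lv v ∧
            le (ε v) ≤ N k ∧ le (ε v) ^ 2 ≤ Q k := by
          intro v hv
          have hvr := hLner v hv
          obtain ⟨u, hu1, hu2⟩ := hc_other v hvr
          have hdv : d v = k := by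
            simpa only [hL, Finset.mem_filter, Finset.mem_univ, true_and] using hv
          have huS : u ∈ S k := by
            simp only [hS, Finset.mem_filter, Finset.mem_univ, true_and]; omega
          obtain ⟨hu3, hu4⟩ := ihv u huS
          refine ⟨hc0 v hvr, hc_le v hvr, _root_.le_trans hu2 hu3, ?_⟩
          calc le (ε v) ^ 2 ≤ lv u ^ 2 := by nlinarith [hc0 v hvr, hu2]
            _ ≤ Q k := hu4
        have hδ0 : ∀ v ∈ L, 0 ≤ lv v - le (ε v) := fun v hv => by
          have := (hfacts v hv).2.1; omega
        have hsumδ0 : 0 ≤ ∑ v ∈ L, (lv v - le (ε v)) := Finset.sum_nonneg hδ0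
        have hsumsq0 : 0 ≤ ∑ v ∈ L, (lv v ^ 2 - le (ε v) ^ 2) := by
          refine Finset.sum_nonneg fun v hv => ?_
          obtain ⟨h1, h2, _, _⟩ := hfacts v hv
          nlinarith [mul_nonneg (by linarith : (0:ℤ) ≤ lv v - le (ε v))
            (by linarith : (0:ℤ) ≤ lv v + le (ε v))]
        refine ⟨fun v hv => ?_, ?_⟩
        · rw [hSL, Finset.mem_union] at hv
          rcases hv with hv | hv
          · obtain ⟨h1, h2⟩ := ihv v hv
            rw [hNsucc, hQsucc]
            constructor <;> linarith
          · -- v ∈ L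
            obtain ⟨h1, h2, h3, h4⟩ := hfacts v hv
            have hsingle_le : lv v - le (ε v) ≤ ∑ w ∈ L, (lv w - le (ε w)) :=
              Finset.single_le_sum hδ0 hv
            have hsinglesq_le : lv v ^ 2 - le (ε v) ^ 2 ≤ ∑ w ∈ L, (lv w ^ 2 - le (ε w) ^ 2) := by
              refine Finset.single_le_sum (f := fun w => lv w ^ 2 - le (ε w) ^ 2)
                (fun w hw => ?_) hv
              obtain ⟨g1, g2, _, _⟩ := hfacts w hw
              show (0:ℤ) ≤ lv w ^ 2 - le (ε w) ^ 2
              nlinarith [mul_nonneg (by linarith : (0:ℤ) ≤ lv w - le (ε w))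
                (by linarith : (0:ℤ) ≤ lv w + le (ε w))]
            rw [hNsucc, hQsucc]
            constructor <;> linarith
        · -- Q (k+1) ≤ N (k+1) ^ 2
          rw [hNsucc, hQsucc]
          set Δ := ∑ v ∈ L, (lv v - le (ε v)) with hΔ
          have hstep : ∑ v ∈ L, (lv v ^ 2 - le (ε v) ^ 2) ≤
              2 * N k * Δ + ∑ v ∈ L, (lv v - le (ε v)) ^ 2 := by
            rw [hΔ, Finset.mul_sum, ← Finset.sum_add_distrib]
            refine Finset.sum_le_sum fun v hv => ?_
            obtain ⟨h1, h2, h3, _⟩ := hfacts v hv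
            nlinarith
          have hsq : ∑ v ∈ L, (lv v - le (ε v)) ^ 2 ≤ Δ ^ 2 := by
            have : ∀ v ∈ L, (lv v - le (ε v)) ^ 2 ≤ (lv v - le (ε v)) * Δ := by
              intro v hv
              have h1 := hδ0 v hv
              have h2 : lv v - le (ε v) ≤ Δ := Finset.single_le_sum hδ0 hv
              nlinarith
            calc ∑ v ∈ L, (lv v - le (ε v)) ^ 2 ≤ ∑ v ∈ L, (lv v - le (ε v)) * Δ :=
                  Finset.sum_le_sum this
              _ = Δ ^ 2 := by rw [← Finset.sum_mul, ← hΔ]; ring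
          nlinarith
  -- specialize to a large k
  set K : ℕ := (Finset.univ.sup d) + 1 with hK
  have hSK : S K = Finset.univ := by
    ext v
    simp only [hS, Finset.mem_filter, Finset.mem_univ, true_and, iff_true]
    have : d v ≤ Finset.univ.sup d := Finset.le_sup (Finset.mem_univ v)
    omega
  have hEK : Ed K = T.edges := by
    rw [hEd]
    refine Finset.filter_true_of_mem fun e _ => ?_
    have h1 : d e.1 ≤ Finset.univ.sup d := Finset.le_sup (Finset.mem_univ _)
    have h2 : d e.2 ≤ Finset.univ.sup d := Finset.le_sup (Finset.mem_univ _)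
    omega
  obtain ⟨mainv, mainQ⟩ := main K
  have hNval : N K = T.netextent lv le := by rw [hN]; simp only [hSK, hEK]; rfl
  have hQval : T.width lv le = 2 * Q K := by
    rw [hQ]; simp only [hSK, hEK]; rfl
  -- trunk bound
  have hne : (Finset.univ : Finset V).Nonempty := Finset.univ_nonempty_iff.mpr ⟨r⟩
  obtain ⟨v0, hv0, hv0eq⟩ := Finset.exists_mem_eq_sup' (Finset.univ_nonempty_iff.mpr ⟨r⟩) lv
  have htrunk' : Ditree.trunk hV lv = lv v0 := hv0eq
  obtain ⟨hv0N, hv0Q⟩ := mainv v0 (hSK ▸ Finset.mem_univ v0)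
  constructor
  · rw [hQval, htrunk']
    linarith
  · rw [hQval, ← hNval]
    have := mainQ
    linarith
end

section
/- Let (T, λ) be a nonnegative width tree, let u be a leaf of T with incident edge f whose other endpoint is w. Define T' by deleting u and f, and define λ' on T' to agree with λ except λ'(w) = λ(u) + λ(w) − λ(f). Then (T', λ') is a width tree and netextent(T', λ') = netextent(T, λ). -/
open Finset

/-- amalgamating a leaf `u` with incident edge `f` into its neighbor `w`,
with the new label λ'(w) = λ(u) + λ(w) − λ(f), yields a width tree with the same net extent. -/
theorem stmt3 {V : Type} [Fintype V] [DecidableEq V] (T : Ditree V)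
    (lv : V → ℤ) (le : V × V → ℤ)
    (hwt : T.IsWidthTree lv le) (hn : T.IsNonneg lv le)
    (u w : V) (f : V × V) (hf : f ∈ T.edges)
    (hleaf : T.incoming u ∪ T.outgoing u = {f})
    (hfw : f = (u, w) ∨ f = (w, u))
    (T' : Ditree {v : V // v ≠ u})
    (hE : ∀ a b : {v : V // v ≠ u},
      ((a, b) ∈ T'.edges ↔ ((a : V), (b : V)) ∈ T.edges ∧ ((a : V), (b : V)) ≠ f))
    (lv' : {v : V // v ≠ u} → ℤ)
    (hlv' : ∀ x : {v : V // v ≠ u},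
      lv' x = if (x : V) = w then lv u + lv w - le f else lv x)
    (le' : {v : V // v ≠ u} × {v : V // v ≠ u} → ℤ)
    (hle' : ∀ e : {v : V // v ≠ u} × {v : V // v ≠ u}, le' e = le ((e.1 : V), (e.2 : V))) :
    T'.IsWidthTree lv' le' ∧ T'.netextent lv' le' = T.netextent lv le := by

  obtain ⟨h1, h2, h3, h4⟩ := hwt
  obtain ⟨hv0, he0⟩ := hn
  have hirr := T.irrefl f hf
  have hne : u ≠ w := by
    rcases hfw with h | h
    · rw [h] at hirr; exact hirr
    · rw [h] at hirr; exact fun e => hirr e.symm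
  set emb : {v : V // v ≠ u} × {v : V // v ≠ u} → V × V :=
    fun e => ((e.1 : V), (e.2 : V)) with hembdef
  have hinj : Function.Injective emb := by
    rintro ⟨a, b⟩ ⟨c, d⟩ h
    simp only [hembdef, Prod.mk.injEq, Subtype.coe_inj] at h
    exact Prod.ext h.1 h.2
  have hnu : ∀ e ∈ T.edges, e ≠ f → e.1 ≠ u ∧ e.2 ≠ u := by
    intro e he hef
    constructor
    · intro h
      have : e ∈ T.incoming u ∪ T.outgoing u :=
        Finset.mem_union_right _ (Finset.mem_filter.mpr ⟨he, h⟩)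
      rw [hleaf, Finset.mem_singleton] at this; exact hef this
    · intro h
      have : e ∈ T.incoming u ∪ T.outgoing u :=
        Finset.mem_union_left _ (Finset.mem_filter.mpr ⟨he, h⟩)
      rw [hleaf, Finset.mem_singleton] at this; exact hef this
  have hlef : le f ≤ lv u := by
    rcases hfw with h | h
    · have hmem : f ∈ T.outgoing u := Finset.mem_filter.mpr ⟨hf, by rw [h]⟩
      have hsub : T.outgoing u = {f} := by
        apply Finset.Subset.antisymm
        · rw [← hleaf]; exact Finset.subset_union_right
        · exact Finset.singleton_subset_iff.mpr hmem
      have := h4 u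
      rwa [hsub, Finset.filter_singleton, if_pos (he0 f hf), Finset.sum_singleton] at this
    · have hmem : f ∈ T.incoming u := Finset.mem_filter.mpr ⟨hf, by rw [h]⟩
      have hsub : T.incoming u = {f} := by
        apply Finset.Subset.antisymm
        · rw [← hleaf]; exact Finset.subset_union_left
        · exact Finset.singleton_subset_iff.mpr hmem
      have := h3 u
      rwa [hsub, Finset.filter_singleton, if_pos (he0 f hf), Finset.sum_singleton] at this
  have hlvge : ∀ x : {v : V // v ≠ u}, lv (x : V) ≤ lv' x := by
    intro x; rw [hlv' x]
    split
    · next h => rw [h]; linarith [hv0 u]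
    · exact le_refl _
  -- sum transfer lemma
  have hsumf : ∀ (s' : Finset ({v : V // v ≠ u} × {v : V // v ≠ u})),
      ∑ e ∈ s'.filter (fun e => 0 ≤ le' e), le' e
        = ∑ e ∈ (s'.image emb).filter (fun e => 0 ≤ le e), le e := by
    intro s'
    rw [Finset.filter_image, Finset.sum_image (fun a _ b _ h => hinj h)]
    apply Finset.sum_congr
    · apply Finset.filter_congr
      intro e _
      simp only [hle' e, hembdef]
    · intro e _; exact (hle' e)
  have hsump : ∀ (s' : Finset ({v : V // v ≠ u} × {v : V // v ≠ u})),
      ∑ e ∈ s', le' e = ∑ e ∈ s'.image emb, le e := by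
    intro s'
    rw [Finset.sum_image (fun a _ b _ h => hinj h)]
    exact Finset.sum_congr rfl fun e _ => (hle' e)
  have hedges : T'.edges.image emb = T.edges.erase f := by
    ext e
    simp only [Finset.mem_image, Finset.mem_erase]
    constructor
    · rintro ⟨a, ha, rfl⟩
      have h := (hE a.1 a.2).mp ha
      exact ⟨h.2, h.1⟩
    · rintro ⟨hef, he⟩
      obtain ⟨h1u, h2u⟩ := hnu e he hef
      exact ⟨(⟨e.1, h1u⟩, ⟨e.2, h2u⟩), (hE _ _).mpr ⟨he, hef⟩, rfl⟩
  have hinc : ∀ x : {v : V // v ≠ u},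
      (T'.incoming x).image emb = (T.incoming (x : V)).erase f := by
    intro x
    ext e
    simp only [Finset.mem_image, Finset.mem_erase, Ditree.incoming, Finset.mem_filter]
    constructor
    · rintro ⟨a, ⟨ha, ha2⟩, rfl⟩
      have h := (hE a.1 a.2).mp ha
      exact ⟨h.2, h.1, congrArg Subtype.val ha2⟩
    · rintro ⟨hef, he, h2⟩
      obtain ⟨h1u, h2u⟩ := hnu e he hef
      exact ⟨(⟨e.1, h1u⟩, ⟨e.2, h2u⟩), ⟨(hE _ _).mpr ⟨he, hef⟩, Subtype.ext h2⟩, rfl⟩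
  have hout : ∀ x : {v : V // v ≠ u},
      (T'.outgoing x).image emb = (T.outgoing (x : V)).erase f := by
    intro x
    ext e
    simp only [Finset.mem_image, Finset.mem_erase, Ditree.outgoing, Finset.mem_filter]
    constructor
    · rintro ⟨a, ⟨ha, ha2⟩, rfl⟩
      have h := (hE a.1 a.2).mp ha
      exact ⟨h.2, h.1, congrArg Subtype.val ha2⟩
    · rintro ⟨hef, he, h2⟩
      obtain ⟨h1u, h2u⟩ := hnu e he hef
      exact ⟨(⟨e.1, h1u⟩, ⟨e.2, h2u⟩), ⟨(hE _ _).mpr ⟨he, hef⟩, Subtype.ext h2⟩, rfl⟩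
  have herc : ∀ (s : Finset (V × V)),
      ∑ e ∈ (s.erase f).filter (fun e => 0 ≤ le e), le e
        ≤ ∑ e ∈ s.filter (fun e => 0 ≤ le e), le e := by
    intro s
    apply Finset.sum_le_sum_of_subset_of_nonneg
    · exact Finset.filter_subset_filter _ (Finset.erase_subset f s)
    · intro e he _; exact (Finset.mem_filter.mp he).2
  refine ⟨⟨?_, ?_, ?_, ?_⟩, ?_⟩
  · intro x
    rw [hlv' x]
    split
    · linarith [hv0 u, hv0 w, hlef]
    · exact h1 _
  · intro e he
    rw [hle' e]
    have h := (hE e.1 e.2).mp he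
    exact h2 _ h.1
  · intro x
    calc ∑ e ∈ (T'.incoming x).filter (fun e => 0 ≤ le' e), le' e
        = ∑ e ∈ ((T.incoming (x : V)).erase f).filter (fun e => 0 ≤ le e), le e := by
          rw [hsumf, hinc]
      _ ≤ ∑ e ∈ (T.incoming (x : V)).filter (fun e => 0 ≤ le e), le e := herc _
      _ ≤ lv (x : V) := h3 _
      _ ≤ lv' x := hlvge x
  · intro x
    calc ∑ e ∈ (T'.outgoing x).filter (fun e => 0 ≤ le' e), le' e
        = ∑ e ∈ ((T.outgoing (x : V)).erase f).filter (fun e => 0 ≤ le e), le e := by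
          rw [hsumf, hout]
      _ ≤ ∑ e ∈ (T.outgoing (x : V)).filter (fun e => 0 ≤ le e), le e := herc _
      _ ≤ lv (x : V) := h4 _
      _ ≤ lv' x := hlvge x
  · -- net extent
    have hB : ∑ e ∈ T'.edges, le' e = (∑ e ∈ T.edges, le e) - le f := by
      rw [hsump, hedges]
      have := Finset.sum_erase_add T.edges le hf
      linarith
    set g : V → ℤ := fun v => if v = w then lv u + lv w - le f else lv v with hg
    have hA : ∑ x : {v : V // v ≠ u}, lv' x = (∑ v, lv v) - le f := by
      have e1 : ∑ x : {v : V // v ≠ u}, lv' x = ∑ v ∈ Finset.univ.filter (fun v => v ≠ u), g v := by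
        have e0 : ∑ v ∈ Finset.univ.filter (fun v => v ≠ u), g v
            = ∑ x : {v : V // v ≠ u}, g (x : V) :=
          Finset.sum_subtype _ (fun x => by simp) g
        rw [e0]
        exact Finset.sum_congr rfl fun x _ => (hlv' x)
      rw [e1, Finset.filter_ne']
      have hwmem : w ∈ Finset.univ.erase u :=
        Finset.mem_erase.mpr ⟨fun h => hne h.symm, Finset.mem_univ w⟩
      have e2 := Finset.add_sum_erase _ g hwmem
      have e3 : ∑ v ∈ (Finset.univ.erase u).erase w, g v
          = ∑ v ∈ (Finset.univ.erase u).erase w, lv v := by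
        apply Finset.sum_congr rfl
        intro v hv
        have : v ≠ w := (Finset.mem_erase.mp hv).1
        simp [hg, this]
      have e4 := Finset.add_sum_erase _ lv hwmem
      have e5 := Finset.add_sum_erase _ lv (Finset.mem_univ u)
      have e6 : g w = lv u + lv w - le f := by simp [hg]
      linarith
    simp only [Ditree.netextent]
    rw [hA, hB]
    ring
end

section
/- Let (T, λ) be a nonnegative width tree, let u be a leaf of T with incident edge f whose other endpoint is w. Define T' by deleting u and f, and define λ'' on T' to agree with λ except λ''(w) = max(λ(u), λ(w)). Then (T', λ'') is a width tree and trunk(T', λ'') = trunk(T, λ). -/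
open Finset

/-- amalgamating a leaf `u` with incident edge `f` into its neighbor `w`,
with the new label λ''(w) = max(λ(u), λ(w)), yields a width tree with the same trunk. -/
theorem stmt4 {V : Type} [Fintype V] [DecidableEq V] (T : Ditree V)
    (lv : V → ℤ) (le : V × V → ℤ)
    (hwt : T.IsWidthTree lv le) (hn : T.IsNonneg lv le)
    (u w : V) (hwu : w ≠ u) (f : V × V) (hf : f ∈ T.edges)
    (hleaf : T.incoming u ∪ T.outgoing u = {f})
    (hfw : f = (u, w) ∨ f = (w, u))
    (T' : Ditree {v : V // v ≠ u})
    (hE : ∀ a b : {v : V // v ≠ u},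
      ((a, b) ∈ T'.edges ↔ ((a : V), (b : V)) ∈ T.edges ∧ ((a : V), (b : V)) ≠ f))
    (lv'' : {v : V // v ≠ u} → ℤ)
    (hlv'' : ∀ x : {v : V // v ≠ u},
      lv'' x = if (x : V) = w then max (lv u) (lv w) else lv x)
    (le' : {v : V // v ≠ u} × {v : V // v ≠ u} → ℤ)
    (hle' : ∀ e : {v : V // v ≠ u} × {v : V // v ≠ u}, le' e = le ((e.1 : V), (e.2 : V))) :
    T'.IsWidthTree lv'' le' ∧
    Ditree.trunk (⟨⟨w, hwu⟩⟩ : Nonempty {v : V // v ≠ u}) lv''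
      = Ditree.trunk (⟨u⟩ : Nonempty V) lv := by
  obtain ⟨hlv1, hle1, hin, hout⟩ := hwt
  obtain ⟨hnv, hne⟩ := hn
  have ginj : Function.Injective
      (fun e : {v : V // v ≠ u} × {v : V // v ≠ u} => ((e.1 : V), (e.2 : V))) := by
    intro a b h
    simp only [Prod.mk.injEq, Subtype.coe_inj] at h
    exact Prod.ext h.1 h.2
  have hlvle : ∀ x : {v : V // v ≠ u}, lv (x : V) ≤ lv'' x := by
    intro x
    rw [hlv'' x]
    split
    · rename_i h; rw [h]; exact le_max_right _ _
    · exact le_refl _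
  have hedge : ∀ e ∈ T'.edges, ((e.1 : V), (e.2 : V)) ∈ T.edges := by
    intro e he
    have : (e.1, e.2) ∈ T'.edges := by rwa [Prod.mk.eta]
    exact ((hE e.1 e.2).mp this).1
  have hinle : ∀ x : {v : V // v ≠ u},
      (∑ e ∈ (T'.incoming x).filter (fun e => 0 ≤ le' e), le' e)
        ≤ ∑ e ∈ (T.incoming (x : V)).filter (fun e => 0 ≤ le e), le e := by
    intro x
    have h1 : (∑ e ∈ (T'.incoming x).filter (fun e => 0 ≤ le' e), le' e)
        = ∑ e ∈ ((T'.incoming x).filter (fun e => 0 ≤ le' e)).image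
            (fun e => ((e.1 : V), (e.2 : V))), le e := by
      rw [Finset.sum_image (fun a _ b _ h => ginj h)]
      exact Finset.sum_congr rfl fun e _ => hle' e
    rw [h1]
    apply Finset.sum_le_sum_of_subset_of_nonneg
    · intro e' he'
      simp only [Finset.mem_image] at he'
      obtain ⟨e, he, rfl⟩ := he'
      simp only [Ditree.incoming, Finset.mem_filter] at he ⊢
      refine ⟨⟨hedge e he.1.1, by exact_mod_cast congrArg Subtype.val he.1.2⟩, ?_⟩
      rw [← hle' e]; exact he.2
    · intro e' he' _
      exact (Finset.mem_filter.mp he').2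
  have houtle : ∀ x : {v : V // v ≠ u},
      (∑ e ∈ (T'.outgoing x).filter (fun e => 0 ≤ le' e), le' e)
        ≤ ∑ e ∈ (T.outgoing (x : V)).filter (fun e => 0 ≤ le e), le e := by
    intro x
    have h1 : (∑ e ∈ (T'.outgoing x).filter (fun e => 0 ≤ le' e), le' e)
        = ∑ e ∈ ((T'.outgoing x).filter (fun e => 0 ≤ le' e)).image
            (fun e => ((e.1 : V), (e.2 : V))), le e := by
      rw [Finset.sum_image (fun a _ b _ h => ginj h)]
      exact Finset.sum_congr rfl fun e _ => hle' e
    rw [h1]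
    apply Finset.sum_le_sum_of_subset_of_nonneg
    · intro e' he'
      simp only [Finset.mem_image] at he'
      obtain ⟨e, he, rfl⟩ := he'
      simp only [Ditree.outgoing, Finset.mem_filter] at he ⊢
      refine ⟨⟨hedge e he.1.1, by exact_mod_cast congrArg Subtype.val he.1.2⟩, ?_⟩
      rw [← hle' e]; exact he.2
    · intro e' he' _
      exact (Finset.mem_filter.mp he').2
  constructor
  · refine ⟨fun x => le_trans (by linarith [hnv (x : V)]) (hlvle x),
      fun e he => by rw [hle' e]; linarith [hne _ (hedge e he)],
      fun x => le_trans (hinle x) (le_trans (hin (x : V)) (hlvle x)),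
      fun x => le_trans (houtle x) (le_trans (hout (x : V)) (hlvle x))⟩
  · unfold Ditree.trunk
    apply le_antisymm
    · apply Finset.sup'_le
      intro x _
      rw [hlv'' x]
      split
      · exact max_le (Finset.le_sup' lv (Finset.mem_univ u)) (Finset.le_sup' lv (Finset.mem_univ w))
      · exact Finset.le_sup' lv (Finset.mem_univ (x : V))
    · apply Finset.sup'_le
      intro v _
      by_cases hv : v = u
      · subst hv
        refine le_trans ?_ (Finset.le_sup' lv'' (Finset.mem_univ ⟨w, hwu⟩))
        rw [hlv'' ⟨w, hwu⟩]
        simp only [if_pos rfl]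
        exact le_max_left _ _
      · exact le_trans (hlvle ⟨v, hv⟩) (Finset.le_sup' lv'' (Finset.mem_univ ⟨v, hv⟩))
end

section
/- If F is a flow on a ditree T, then for any two strong source-sink cuts S and S' of T, the value of F on S equals the value of F on S'; moreover this common value equals the net extent of (T, F). -/
open Finset

lemma stmt7_aux {V : Type} [Fintype V] [DecidableEq V] (T : Ditree V)
    (Fv : V → ℤ) (Fe : V × V → ℤ) (hF : T.IsFlow Fv Fe)
    (S : Finset V) (hS : T.IsCut S) :
    T.flowVal Fe S = T.netextent Fv Fe := by
  obtain ⟨h1, h2, hsink, hsource, hmid⟩ := hF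
  obtain ⟨hsrc, hsnk, hcut⟩ := hS
  have hA : ∑ v ∈ S, Fv v = ∑ e ∈ T.edges.filter (fun e => e.1 ∈ S), Fe e := by
    rw [← Finset.sum_fiberwise_of_maps_to (g := Prod.fst)
      (fun e he => (Finset.mem_filter.mp he).2) Fe]
    refine Finset.sum_congr rfl (fun v hv => ?_)
    have hfv : Fv v = ∑ e ∈ T.outgoing v, Fe e := by
      by_cases hsv : T.IsSource v
      · exact hsource v hsv
      · exact (hmid v hsv (hsnk v hv)).2
    rw [hfv]
    refine Finset.sum_congr ?_ (fun _ _ => rfl)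
    unfold Ditree.outgoing
    rw [Finset.filter_filter]
    refine Finset.filter_congr (fun e he => ?_)
    constructor
    · intro h; exact ⟨h ▸ hv, h⟩
    · rintro ⟨_, h⟩; exact h
  have hB : ∑ v ∈ Sᶜ, Fv v = ∑ e ∈ T.edges.filter (fun e => e.2 ∈ Sᶜ), Fe e := by
    rw [← Finset.sum_fiberwise_of_maps_to (g := Prod.snd)
      (fun e he => (Finset.mem_filter.mp he).2) Fe]
    refine Finset.sum_congr rfl (fun v hv => ?_)
    have hsv : ¬ T.IsSource v := fun h => (Finset.mem_compl.mp hv) (hsrc v h)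
    have hfv : Fv v = ∑ e ∈ T.incoming v, Fe e := by
      by_cases hk : T.IsSink v
      · exact hsink v hk
      · exact (hmid v hsv hk).1
    rw [hfv]
    refine Finset.sum_congr ?_ (fun _ _ => rfl)
    unfold Ditree.incoming
    rw [Finset.filter_filter]
    refine Finset.filter_congr (fun e he => ?_)
    constructor
    · intro h; exact ⟨h ▸ hv, h⟩
    · rintro ⟨_, h⟩; exact h
  have hsplit : ∑ v, Fv v = (∑ v ∈ S, Fv v) + ∑ v ∈ Sᶜ, Fv v :=
    (Finset.sum_add_sum_compl S Fv).symm
  have hedge : (∑ e ∈ T.edges.filter (fun e => e.1 ∈ S), Fe e)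
      + (∑ e ∈ T.edges.filter (fun e => e.2 ∈ Sᶜ), Fe e)
      = (∑ e ∈ T.edges, Fe e) + ∑ e ∈ T.cutEdges S, Fe e := by
    unfold Ditree.cutEdges
    rw [Finset.sum_filter, Finset.sum_filter, Finset.sum_filter,
      ← Finset.sum_add_distrib, ← Finset.sum_add_distrib]
    refine Finset.sum_congr rfl (fun e he => ?_)
    by_cases hx : e.1 ∈ S <;> by_cases hy : e.2 ∈ S
    · simp [hx, hy]
    · simp [hx, hy]
    · exact absurd (hcut e he hy) hx
    · simp [hx, hy]
  unfold Ditree.flowVal Ditree.netextent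
  rw [hsplit, hA, hB] at *
  linarith [hedge]

/-- the value of a flow is the same on any two strong source-sink cuts, and
this common value is the net extent of the flow. -/
theorem stmt7 {V : Type} [Fintype V] [DecidableEq V] (T : Ditree V)
    (Fv : V → ℤ) (Fe : V × V → ℤ) (hF : T.IsFlow Fv Fe)
    (S S' : Finset V) (hS : T.IsCut S) (hS' : T.IsCut S') :
    T.flowVal Fe S = T.flowVal Fe S' ∧ T.flowVal Fe S = T.netextent Fv Fe :=
  ⟨(stmt7_aux T Fv Fe hF S hS).trans (stmt7_aux T Fv Fe hF S' hS').symm,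
    stmt7_aux T Fv Fe hF S hS⟩
end

section
/- For any ditree T (without boundary vertices), there exists a productless positive label function λ such that (T, λ) is a width tree and netextent(T, λ) = N²₋(T) + N²₊(T) + max|∂S|, the maximum over strong source-sink cuts S of T. -/
open Finset

/-! Give every edge a flow value `F e ≥ 1` and every vertex the larger of its inflow and
outflow, plus one for each of its in- and out-degrees equal to one. The net extent is then
`N²₋ + N²₊ + Σ_v max(out v - in v, 0)`, and the last sum is the value of a flow with lower
bound one on the edges. By the min-flow max-cut duality it can be made equal to `max |∂S|`:
for any predecessor-closed `S` it is at least
`Σ_{v ∈ S} (out v - in v) = Σ_{e ∈ ∂S} F e ≥ |∂S|`, and for a flow minimising it, the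
vertices from which a vertex of positive net outflow is reachable by augmenting paths form a
strong cut whose boundary carries flow one. -/

theorem List.exists_nodup_isChain_cons_of_relationReflTransGen {α : Type*} [DecidableEq α]
    {r : α → α → Prop} {a b : α} (h : Relation.ReflTransGen r a b) :
    ∃ l, (a :: l).Nodup ∧ (a :: l).IsChain r ∧ (a :: l).getLast (cons_ne_nil _ _) = b := by
  induction h using Relation.ReflTransGen.head_induction_on with
  | refl => exact ⟨[], nodup_singleton _, .singleton _, rfl⟩
  | @head a c hac _ ih =>
    obtain ⟨l, hnd, hch, hlast⟩ := ih
    by_cases ha : a ∈ c :: l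
    · -- cut the cycle through `a`
      obtain ⟨l₁, l₂, hsplit⟩ := append_of_mem ha
      have hsuf : a :: l₂ <:+ c :: l := hsplit ▸ suffix_append l₁ (a :: l₂)
      refine ⟨l₂, hnd.sublist hsuf.sublist, hch.suffix hsuf, ?_⟩
      simp_rw [← hlast, hsplit, getLast_append_of_ne_nil _ (cons_ne_nil a l₂)]
    · exact ⟨c :: l, nodup_cons.2 ⟨ha, hnd⟩, hch.cons_cons hac, by rwa [getLast_cons_cons]⟩

namespace Ditree

variable {V : Type} [Fintype V] [DecidableEq V] (T : Ditree V)

def inflow (F : V × V → ℤ) (v : V) : ℤ := ∑ e ∈ T.incoming v, F e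

def outflow (F : V × V → ℤ) (v : V) : ℤ := ∑ e ∈ T.outgoing v, F e

def netOutflow (F : V × V → ℤ) (v : V) : ℤ := T.outflow F v - T.inflow F v

def imbalance (F : V × V → ℤ) : ℤ := ∑ v, max (T.netOutflow F v) 0

def IsEdgePositive (F : V × V → ℤ) : Prop := ∀ e ∈ T.edges, 1 ≤ F e

section FlowSums

variable (F : V × V → ℤ)

lemma sum_inflow (S : Finset V) :
    ∑ v ∈ S, T.inflow F v = ∑ e ∈ T.edges with e.2 ∈ S, F e := by
  simpa [inflow, incoming] using sum_fiberwise_eq_sum_filter T.edges S Prod.snd F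

lemma sum_outflow (S : Finset V) :
    ∑ v ∈ S, T.outflow F v = ∑ e ∈ T.edges with e.1 ∈ S, F e := by
  simpa [outflow, outgoing] using sum_fiberwise_eq_sum_filter T.edges S Prod.fst F

lemma sum_inflow_univ : ∑ v, T.inflow F v = ∑ e ∈ T.edges, F e := by
  simp [sum_inflow]

lemma sum_netOutflow_of_closed {S : Finset V} (hS : ∀ e ∈ T.edges, e.2 ∈ S → e.1 ∈ S) :
    ∑ v ∈ S, T.netOutflow F v = ∑ e ∈ T.cutEdges S, F e := by
  simp only [netOutflow]
  rw [sum_sub_distrib, sum_outflow, sum_inflow, cutEdges, sum_filter, sum_filter, sum_filter,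
    ← sum_sub_distrib]
  refine sum_congr rfl fun e he => ?_
  by_cases h₂ : e.2 ∈ S
  · simp [h₂, hS e he h₂]
  · simp [h₂]

lemma sum_netOutflow_le_imbalance (S : Finset V) :
    ∑ v ∈ S, T.netOutflow F v ≤ T.imbalance F :=
  calc ∑ v ∈ S, T.netOutflow F v ≤ ∑ v ∈ S, max (T.netOutflow F v) 0 :=
        sum_le_sum fun _ _ => le_max_left _ _
    _ ≤ T.imbalance F :=
        sum_le_sum_of_subset_of_nonneg (subset_univ S) fun _ _ _ => le_max_right _ _

lemma imbalance_nonneg : 0 ≤ T.imbalance F :=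
  sum_nonneg fun _ _ => le_max_right _ _

end FlowSums

variable {T}

lemma IsEdgePositive.cutSize_le_imbalance {F : V × V → ℤ} (hF : T.IsEdgePositive F)
    {S : Finset V} (hS : ∀ e ∈ T.edges, e.2 ∈ S → e.1 ∈ S) :
    (T.cutSize S : ℤ) ≤ T.imbalance F :=
  calc (T.cutSize S : ℤ) = ∑ _e ∈ T.cutEdges S, 1 := by simp [cutSize]
    _ ≤ ∑ e ∈ T.cutEdges S, F e := sum_le_sum fun e he => hF e (filter_subset _ _ he)
    _ = ∑ v ∈ S, T.netOutflow F v := (T.sum_netOutflow_of_closed F hS).symm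
    _ ≤ T.imbalance F := T.sum_netOutflow_le_imbalance F S

lemma IsEdgePositive.one_le_sum {F : V × V → ℤ} (hF : T.IsEdgePositive F)
    {s : Finset (V × V)} (hs : s ⊆ T.edges) (hne : s.Nonempty) : 1 ≤ ∑ e ∈ s, F e := by
  obtain ⟨e, he⟩ := hne
  exact (hF e (hs he)).trans (single_le_sum (fun e he => zero_le_one.trans (hF e (hs he))) he)

lemma IsEdgePositive.one_le_inflow {F : V × V → ℤ} (hF : T.IsEdgePositive F) {v : V}
    (hv : (T.incoming v).Nonempty) : 1 ≤ T.inflow F v :=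
  hF.one_le_sum (filter_subset _ _) hv

lemma IsEdgePositive.one_le_outflow {F : V × V → ℤ} (hF : T.IsEdgePositive F) {v : V}
    (hv : (T.outgoing v).Nonempty) : 1 ≤ T.outflow F v :=
  hF.one_le_sum (filter_subset _ _) hv

lemma IsCut.incoming_nonempty_or_outgoing_nonempty {S : Finset V} (hS : T.IsCut S) (v : V) :
    (T.incoming v).Nonempty ∨ (T.outgoing v).Nonempty := by
  by_contra! h
  exact hS.2.1 v (hS.1 v h.1) h.2

variable (T)

/-- `x → y` is an arc of the residual graph: one more unit can be sent from `x` to `y` without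
dropping an edge below flow one. -/
def IsResidual (F : V × V → ℤ) (x y : V) : Prop :=
  (x, y) ∈ T.edges ∨ ((y, x) ∈ T.edges ∧ 2 ≤ F (y, x))

def push (F : V × V → ℤ) (x y : V) : V × V → ℤ :=
  if (x, y) ∈ T.edges then F + Pi.single (x, y) 1 else F + Pi.single (y, x) (-1)

lemma netOutflow_add_single (F : V × V → ℤ) {c : V × V} (hc : c ∈ T.edges) (δ : ℤ)
    (v : V) :
    T.netOutflow (F + Pi.single c δ) v
      = T.netOutflow F v + (if c.1 = v then δ else 0) - (if c.2 = v then δ else 0) := by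
  simp only [netOutflow, outflow, inflow, Pi.add_apply, sum_add_distrib, sum_pi_single',
    outgoing, incoming, mem_filter, hc, true_and]
  ring

variable {T}

lemma IsResidual.ne {F : V × V → ℤ} {x y : V} (h : T.IsResidual F x y) : x ≠ y := by
  rcases h with h | ⟨h, -⟩
  · exact T.irrefl _ h
  · exact (T.irrefl _ h).symm

lemma IsResidual.netOutflow_push {F : V × V → ℤ} {x y : V} (h : T.IsResidual F x y) (v : V) :
    T.netOutflow (T.push F x y) v
      = T.netOutflow F v + (if x = v then 1 else 0) - (if y = v then 1 else 0) := by
  by_cases hxy : (x, y) ∈ T.edges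
  · rw [push, if_pos hxy, T.netOutflow_add_single F hxy]
  · rw [push, if_neg hxy, T.netOutflow_add_single F (h.resolve_left hxy).1]
    split_ifs <;> ring

lemma push_apply_of_ne (F : V × V → ℤ) {x y : V} {e : V × V} (h₁ : e.1 ≠ x)
    (h₂ : e.2 ≠ x) :
    T.push F x y e = F e := by
  have h₁' : e ≠ (x, y) := fun h => h₁ (by rw [h])
  have h₂' : e ≠ (y, x) := fun h => h₂ (by rw [h])
  unfold push
  split_ifs <;> simp [Pi.single_eq_of_ne, h₁', h₂']

lemma IsEdgePositive.push {F : V × V → ℤ} (hF : T.IsEdgePositive F) {x y : V}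
    (h : T.IsResidual F x y) : T.IsEdgePositive (T.push F x y) := by
  intro e he
  unfold Ditree.push
  split_ifs with hxy
  · simp only [Pi.add_apply, Pi.single_apply]
    split_ifs <;> linarith [hF e he]
  · obtain ⟨-, h2⟩ := h.resolve_left hxy
    simp only [Pi.add_apply, Pi.single_apply]
    split_ifs with heq
    · subst heq; linarith
    · linarith [hF e he]

lemma IsResidual.push {F : V × V → ℤ} {x y u w : V} (h : T.IsResidual F u w) (hu : u ≠ x)
    (hw : w ≠ x) : T.IsResidual (T.push F x y) u w := by
  rcases h with h | ⟨h, h2⟩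
  · exact Or.inl h
  · exact Or.inr ⟨h, by rwa [push_apply_of_ne F hw hu]⟩

lemma IsResidual.imbalance_push {F : V × V → ℤ} {x y : V} (h : T.IsResidual F x y)
    (hx : T.netOutflow F x < 0) :
    T.imbalance (T.push F x y)
      = T.imbalance F + (max (T.netOutflow F y - 1) 0 - max (T.netOutflow F y) 0) := by
  have hxy := h.ne
  have key : ∀ v ∈ (univ : Finset V), max (T.netOutflow (T.push F x y) v) 0
      = max (T.netOutflow F v) 0
        + if y = v then max (T.netOutflow F y - 1) 0 - max (T.netOutflow F y) 0 else 0 := by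
    intro v _
    rw [h.netOutflow_push v]
    by_cases hv : x = v
    · subst hv
      simp [hxy.symm, max_eq_right hx.le]
      omega
    · by_cases hyv : y = v
      · subst hyv; simp [hv]
      · simp [hv, hyv]
  simp only [imbalance, sum_congr rfl key, sum_add_distrib, sum_ite_eq, mem_univ, if_true]

/-- Augmentation along a simple residual path, one arc at a time: simplicity keeps the arcs
still to be used untouched by the earlier pushes. -/
theorem IsEdgePositive.exists_imbalance_lt {F : V × V → ℤ} (hF : T.IsEdgePositive F) {b : V}
    {l : List V} (hnd : (b :: l).Nodup) (hch : (b :: l).IsChain (T.IsResidual F))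
    (hb : T.netOutflow F b < 0)
    (hlast : 0 < T.netOutflow F ((b :: l).getLast (List.cons_ne_nil _ _))) :
    ∃ G, T.IsEdgePositive G ∧ T.imbalance G < T.imbalance F := by
  induction l generalizing F b with
  | nil => exact absurd hlast (not_lt.2 hb.le)
  | cons x rest ih =>
    rw [List.isChain_cons_cons] at hch
    obtain ⟨hbx, hrest⟩ := hch
    obtain ⟨hb_notMem, hnd'⟩ := List.nodup_cons.1 hnd
    have himb := hbx.imbalance_push hb
    by_cases hx : 0 < T.netOutflow F x
    · refine ⟨_, hF.push hbx, ?_⟩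
      rw [himb, max_eq_left (by omega), max_eq_left hx.le]
      omega
    · push Not at hx
      rw [List.getLast_cons_cons] at hlast
      have hab : b ≠ (x :: rest).getLast (List.cons_ne_nil x rest) :=
        fun h => hb_notMem (h ▸ List.getLast_mem _)
      have hxa : x ≠ (x :: rest).getLast (List.cons_ne_nil x rest) :=
        fun h => by rw [← h] at hlast; omega
      have hbx' : b ≠ x := hbx.ne
      obtain ⟨G, hG, hlt⟩ := ih (hF.push hbx) hnd'
        (hrest.imp_of_mem_imp fun u w hu hw huw =>
          huw.push (fun h => hb_notMem (h ▸ hu)) (fun h => hb_notMem (h ▸ hw)))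
        (by rw [hbx.netOutflow_push]; simp [hbx']; omega)
        (by rw [hbx.netOutflow_push]; simpa [hab, hxa] using hlast)
      refine ⟨G, hG, hlt.trans_le ?_⟩
      rw [himb, max_eq_right (by omega), max_eq_right hx]
      simp

variable (T) in
def IsImbalanceMinimal (F : V × V → ℤ) : Prop :=
  T.IsEdgePositive F ∧ ∀ G, T.IsEdgePositive G → T.imbalance F ≤ T.imbalance G

variable (T) in
theorem exists_isImbalanceMinimal : ∃ F, T.IsImbalanceMinimal F := by
  obtain ⟨F, hF, hmin⟩ : ∃ F ∈ {F | T.IsEdgePositive F},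
      ∀ G ∈ {F | T.IsEdgePositive F}, (T.imbalance F).toNat ≤ (T.imbalance G).toNat :=
    ⟨_, Function.argminOn_mem _ {F | T.IsEdgePositive F} ⟨1, fun _ _ => le_rfl⟩,
      fun _ hG => Function.argminOn_le (fun F => (T.imbalance F).toNat) _ hG⟩
  refine ⟨F, hF, fun G hG => ?_⟩
  have := hmin G hG
  have := T.imbalance_nonneg F
  have := T.imbalance_nonneg G
  omega

variable (T) in
open Classical in
noncomputable def residualCut (F : V × V → ℤ) : Finset V :=
  {v | ∃ a, 0 < T.netOutflow F a ∧ Relation.ReflTransGen (T.IsResidual F) v a}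

section ResidualCut

variable {F : V × V → ℤ}

lemma mem_residualCut_of_pos {v : V} (hv : 0 < T.netOutflow F v) : v ∈ T.residualCut F := by
  simpa [residualCut] using ⟨v, hv, .refl⟩

lemma IsResidual.mem_residualCut {u v : V} (h : T.IsResidual F u v) (hv : v ∈ T.residualCut F) :
    u ∈ T.residualCut F := by
  simp only [residualCut, mem_filter, mem_univ, true_and] at hv ⊢
  obtain ⟨a, ha, hva⟩ := hv
  exact ⟨a, ha, .head h hva⟩

lemma residualCut_closed {e : V × V} (he : e ∈ T.edges) (h : e.2 ∈ T.residualCut F) :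
    e.1 ∈ T.residualCut F :=
  IsResidual.mem_residualCut (Or.inl he) h

lemma IsEdgePositive.eq_one_of_mem_cutEdges_residualCut (hF : T.IsEdgePositive F) {e : V × V}
    (he : e ∈ T.cutEdges (T.residualCut F)) : F e = 1 := by
  obtain ⟨he, h₁, h₂⟩ := mem_filter.1 he
  by_contra hne
  have h₂₁ : T.IsResidual F e.2 e.1 :=
    Or.inr ⟨he, by have := hF e he; rw [Prod.mk.eta]; omega⟩
  exact h₂ (h₂₁.mem_residualCut h₁)

lemma IsImbalanceMinimal.netOutflow_nonneg (hF : T.IsImbalanceMinimal F) {v : V}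
    (hv : v ∈ T.residualCut F) : 0 ≤ T.netOutflow F v := by
  by_contra! hneg
  obtain ⟨a, ha, hva⟩ := by simpa [residualCut] using hv
  obtain ⟨l, hnd, hch, rfl⟩ := List.exists_nodup_isChain_cons_of_relationReflTransGen hva
  obtain ⟨G, hG, hlt⟩ := hF.1.exists_imbalance_lt hnd hch hneg ha
  exact (hF.2 G hG).not_gt hlt

lemma netOutflow_nonpos_of_notMem_residualCut {v : V} (hv : v ∉ T.residualCut F) :
    T.netOutflow F v ≤ 0 :=
  not_lt.1 fun h => hv (mem_residualCut_of_pos h)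

lemma IsImbalanceMinimal.isCut_residualCut (hF : T.IsImbalanceMinimal F)
    (hT : ∀ v, (T.incoming v).Nonempty ∨ (T.outgoing v).Nonempty) :
    T.IsCut (T.residualCut F) := by
  refine ⟨fun v hv => mem_residualCut_of_pos ?_, fun v hv hsink => ?_,
    fun e he => residualCut_closed he⟩
  · have hout := hF.1.one_le_outflow ((hT v).resolve_left (not_nonempty_iff_eq_empty.2 hv))
    simp [netOutflow, inflow, show T.incoming v = ∅ from hv]
    omega
  · have hin := hF.1.one_le_inflow ((hT v).resolve_right (not_nonempty_iff_eq_empty.2 hsink))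
    have := hF.netOutflow_nonneg hv
    simp [netOutflow, outflow, show T.outgoing v = ∅ from hsink] at this
    omega

lemma IsImbalanceMinimal.imbalance_eq_cutSize (hF : T.IsImbalanceMinimal F) :
    T.imbalance F = T.cutSize (T.residualCut F) := by
  calc T.imbalance F = ∑ v ∈ T.residualCut F, T.netOutflow F v := by
        have hmax : ∀ v, max (T.netOutflow F v) 0
            = if v ∈ T.residualCut F then T.netOutflow F v else 0 := fun v => by
          split_ifs with hv
          · exact max_eq_left (hF.netOutflow_nonneg hv)
          · exact max_eq_right (netOutflow_nonpos_of_notMem_residualCut hv)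
        rw [imbalance, sum_congr rfl fun v _ => hmax v, sum_ite_mem, univ_inter]
    _ = ∑ e ∈ T.cutEdges (T.residualCut F), F e :=
        T.sum_netOutflow_of_closed F fun e he => residualCut_closed he
    _ = T.cutSize (T.residualCut F) := by
        rw [sum_congr rfl fun e he => hF.1.eq_one_of_mem_cutEdges_residualCut he]
        simp [cutSize]

end ResidualCut

theorem exists_isEdgePositive_imbalance_eq {m : ℕ} (hmax : ∃ S, T.IsCut S ∧ T.cutSize S = m)
    (hub : ∀ S, T.IsCut S → T.cutSize S ≤ m) :
    ∃ F, T.IsEdgePositive F ∧ T.imbalance F = m := by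
  obtain ⟨S, hS, rfl⟩ := hmax
  obtain ⟨F, hF⟩ := T.exists_isImbalanceMinimal
  refine ⟨F, hF.1, le_antisymm ?_ (hF.1.cutSize_le_imbalance hS.2.2)⟩
  rw [hF.imbalance_eq_cutSize]
  exact_mod_cast hub _ (hF.isCut_residualCut hS.incoming_nonempty_or_outgoing_nonempty)

variable (T) in
/-- The extra units at vertices of in- or out-degree one keep the unique edge there from being
a product edge; they account for the terms `N²₋ + N²₊`. -/
def label (F : V × V → ℤ) (v : V) : ℤ :=
  max (T.inflow F v) (T.outflow F v) + (if T.inDeg v = 1 then 1 else 0)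
    + (if T.outDeg v = 1 then 1 else 0)

section Label

variable (F : V × V → ℤ)

lemma max_inflow_outflow_le_label (v : V) :
    max (T.inflow F v) (T.outflow F v) ≤ T.label F v := by
  unfold label
  split_ifs <;> omega

lemma inflow_add_one_le_label {v : V} (hv : T.inDeg v = 1) :
    T.inflow F v + 1 ≤ T.label F v := by
  have := le_max_left (T.inflow F v) (T.outflow F v)
  unfold label
  split_ifs <;> omega

lemma outflow_add_one_le_label {v : V} (hv : T.outDeg v = 1) :
    T.outflow F v + 1 ≤ T.label F v := by
  have := le_max_right (T.inflow F v) (T.outflow F v)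
  unfold label
  split_ifs <;> omega

lemma productless_label : T.Productless (T.label F) F := by
  rintro e ⟨-, ⟨hin, heq⟩ | ⟨hout, heq⟩⟩
  · have := T.inflow_add_one_le_label F (v := e.2) (by rw [inDeg, hin, card_singleton])
    rw [inflow, hin, sum_singleton] at this
    omega
  · have := T.outflow_add_one_le_label F (v := e.1) (by rw [outDeg, hout, card_singleton])
    rw [outflow, hout, sum_singleton] at this
    omega

lemma netextent_label :
    T.netextent (T.label F) F = T.N2minus + T.N2plus + T.imbalance F := by
  have hmax : ∀ v, max (T.inflow F v) (T.outflow F v) = T.inflow F v + max (T.netOutflow F v) 0 :=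
    fun v => by unfold netOutflow; omega
  simp only [netextent, label, sum_add_distrib, hmax, sum_inflow_univ, sum_boole, N2minus, N2plus,
    imbalance]
  ring

variable {F}

lemma IsEdgePositive.isWidthTree_label (hF : T.IsEdgePositive F) :
    T.IsWidthTree (T.label F) F := by
  have hfilter : ∀ s ⊆ T.edges, s.filter (fun e => 0 ≤ F e) = s := fun s hs =>
    filter_true_of_mem fun e he => zero_le_one.trans (hF e (hs he))
  have hin : ∀ v, 0 ≤ T.inflow F v := fun v =>
    sum_nonneg fun e he => zero_le_one.trans (hF e (filter_subset _ _ he))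
  refine ⟨fun v => ?_, fun e he => (hF e he).trans' (by norm_num), fun v => ?_, fun v => ?_⟩
  · have := (le_max_left _ _).trans (T.max_inflow_outflow_le_label F v)
    linarith [hin v]
  · rw [hfilter (T.incoming v) (filter_subset _ _)]
    exact (le_max_left _ _).trans (T.max_inflow_outflow_le_label F v)
  · rw [hfilter (T.outgoing v) (filter_subset _ _)]
    exact (le_max_right _ _).trans (T.max_inflow_outflow_le_label F v)

lemma IsEdgePositive.isPositive_label (hF : T.IsEdgePositive F)
    (hT : ∀ v, (T.incoming v).Nonempty ∨ (T.outgoing v).Nonempty) :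
    T.IsPositive (T.label F) F := by
  refine ⟨fun v => le_trans ?_ (T.max_inflow_outflow_le_label F v), hF⟩
  rcases hT v with h | h
  · exact (hF.one_le_inflow h).trans (le_max_left _ _)
  · exact (hF.one_le_outflow h).trans (le_max_right _ _)

end Label

end Ditree

/-- for any ditree there is a productless positive labelling achieving
netextent = N²₋ + N²₊ + max|∂S|, the maximum over strong source-sink cuts. -/
theorem stmt10 {V : Type} [Fintype V] [DecidableEq V] (T : Ditree V) (m : ℕ)
    (hmax : ∃ S : Finset V, T.IsCut S ∧ T.cutSize S = m)
    (hub : ∀ S : Finset V, T.IsCut S → T.cutSize S ≤ m) :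
    ∃ (lv : V → ℤ) (le : V × V → ℤ),
      T.IsWidthTree lv le ∧ T.IsPositive lv le ∧ T.Productless lv le ∧
      T.netextent lv le = (T.N2minus : ℤ) + T.N2plus + m := by
  obtain ⟨F, hF, himb⟩ := Ditree.exists_isEdgePositive_imbalance_eq hmax hub
  obtain ⟨S, hS, -⟩ := hmax
  refine ⟨T.label F, F, hF.isWidthTree_label,
    hF.isPositive_label hS.incoming_nonempty_or_outgoing_nonempty, T.productless_label F, ?_⟩
  rw [T.netextent_label, himb]
end

section
/- Let F be a flow on a ditree T and let α be an adjusting path for F, i.e., a (possibly non-coherent) path from a source to a sink such that F(e) ≥ 2 on each edge e traversed forward. Let ε = min{F(e) − 1 : e traversed forward by α} and define F' by subtracting ε on forward-traversed edges, adding ε on backward-traversed edges, leaving other edges unchanged, and setting F'(v) = max(F'(v_−), F'(v_+)) on vertices. Then F' is a flow and netextent(T, F') = netextent(T, F) − ε. -/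
open Finset

lemma sum_ite_eq_nat' (n k : ℕ) (g : ℕ → ℤ) :
    (∑ m ∈ Finset.range n, if m = k then g m else 0) = if k < n then g k else 0 := by
  rw [Finset.sum_ite_eq' (Finset.range n) k g]
  simp [Finset.mem_range]

lemma sum_ite_succ_eq' (n k : ℕ) (g : ℕ → ℤ) :
    (∑ m ∈ Finset.range n, if m + 1 = k then g m else 0)
      = if 1 ≤ k ∧ k ≤ n then g (k - 1) else 0 := by
  by_cases hk : 1 ≤ k
  · calc (∑ m ∈ Finset.range n, if m + 1 = k then g m else 0)
        = ∑ m ∈ Finset.range n, if m = k - 1 then g m else 0 := by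
          apply Finset.sum_congr rfl; intro m _
          by_cases h : m + 1 = k
          · rw [if_pos h, if_pos (by omega)]
          · rw [if_neg h, if_neg (by omega)]
      _ = if k - 1 < n then g (k-1) else 0 := sum_ite_eq_nat' n (k-1) g
      _ = if 1 ≤ k ∧ k ≤ n then g (k - 1) else 0 := by
          by_cases h : k - 1 < n
          · rw [if_pos h, if_pos (by omega)]
          · rw [if_neg h, if_neg (by omega)]
  · have hk0 : k = 0 := by omega
    subst hk0
    simp
/-- adjusting a flow along an adjusting path yields a flow whose
net extent drops by ε. -/
theorem stmt12 {V : Type} [Fintype V] [DecidableEq V] (T : Ditree V)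
    (Fv : V → ℤ) (Fe : V × V → ℤ) (hF : T.IsFlow Fv Fe)
    (n : ℕ) (hn : 0 < n) (p : Fin (n + 1) → V) (hp : Function.Injective p)
    (hsrc : T.IsSource (p 0)) (hsink : T.IsSink (p (Fin.last n)))
    (dir : Fin n → Bool)
    (hstep : ∀ i : Fin n, if dir i then (p i.castSucc, p i.succ) ∈ T.edges
      else (p i.succ, p i.castSucc) ∈ T.edges)
    (Fwd Bwd : Finset (V × V))
    (hFwd : Fwd = (Finset.univ.filter fun i : Fin n => dir i = true).image
      fun i => (p i.castSucc, p i.succ))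
    (hBwd : Bwd = (Finset.univ.filter fun i : Fin n => dir i = false).image
      fun i => (p i.succ, p i.castSucc))
    (h2 : ∀ e ∈ Fwd, 2 ≤ Fe e)
    (ε : ℤ) (hlb : ∀ e ∈ Fwd, ε ≤ Fe e - 1) (hmem : ∃ e ∈ Fwd, ε = Fe e - 1)
    (Fe' : V × V → ℤ)
    (hFe' : ∀ e : V × V,
      Fe' e = if e ∈ Fwd then Fe e - ε else if e ∈ Bwd then Fe e + ε else Fe e)
    (Fv' : V → ℤ)
    (hFv' : ∀ v, Fv' v = max (∑ e ∈ T.incoming v, Fe' e) (∑ e ∈ T.outgoing v, Fe' e)) :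
    T.IsFlow Fv' Fe' ∧ T.netextent Fv' Fe' = T.netextent Fv Fe - ε := by
  classical
  obtain ⟨hFv1, hFe1, hsinkF, hsrcF, hconsF⟩ := hF
  obtain ⟨e₀, he₀F, he₀⟩ := hmem
  have hε1 : 1 ≤ ε := by have := h2 e₀ he₀F; omega
  have hfwd_mem : ∀ i : Fin n, dir i = true → (p i.castSucc, p i.succ) ∈ T.edges := by
    intro i hi; have h := hstep i; simpa [hi] using h
  have hbwd_mem : ∀ i : Fin n, dir i = false → (p i.succ, p i.castSucc) ∈ T.edges := by
    intro i hi; have h := hstep i; simpa [hi] using h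
  have hFwd_iff : ∀ e, e ∈ Fwd ↔ ∃ i : Fin n, dir i = true ∧ (p i.castSucc, p i.succ) = e := by
    intro e; subst hFwd; simp
  have hBwd_iff : ∀ e, e ∈ Bwd ↔ ∃ i : Fin n, dir i = false ∧ (p i.succ, p i.castSucc) = e := by
    intro e; subst hBwd; simp
  have hcs : ∀ {i j : Fin n}, p i.castSucc = p j.castSucc → i = j :=
    fun h => Fin.castSucc_injective n (hp h)
  have hsc : ∀ {i j : Fin n}, p i.succ = p j.succ → i = j :=
    fun h => Fin.succ_injective n (hp h)
  have hne : ∀ (i j : Fin n), (p i.castSucc, p i.succ) ≠ (p j.succ, p j.castSucc) := by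
    intro i j h
    have h1 : i.castSucc = j.succ := hp (congrArg Prod.fst h)
    have h2 : i.succ = j.castSucc := hp (congrArg Prod.snd h)
    have e1 : (i : ℕ) = (j : ℕ) + 1 := by
      have := congrArg Fin.val h1; simpa using this
    have e2 : (i : ℕ) + 1 = (j : ℕ) := by
      have := congrArg Fin.val h2; simpa using this
    omega
  set d : Fin n → (V × V) → ℤ := fun i e =>
    if dir i then (if e = (p i.castSucc, p i.succ) then -ε else 0)
    else (if e = (p i.succ, p i.castSucc) then ε else 0) with hd
  have hD_eval : ∀ e, (∑ i : Fin n, d i e) =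
      if e ∈ Fwd then -ε else if e ∈ Bwd then ε else 0 := by
    intro e
    by_cases heF : e ∈ Fwd
    · obtain ⟨i, hi, hei⟩ := (hFwd_iff e).1 heF
      rw [if_pos heF, Finset.sum_eq_single i]
      · simp [hd, hi, hei.symm]
      · intro j _ hji
        have hj1 : e ≠ (p j.castSucc, p j.succ) := by
          intro h
          exact hji (hcs (congrArg Prod.fst (hei.trans h))).symm
        have hj2 : e ≠ (p j.succ, p j.castSucc) := by
          intro h; exact hne i j (hei.trans h)
        simp [hd, hj1, hj2]
      · simp
    · by_cases heB : e ∈ Bwd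
      · obtain ⟨i, hi, hei⟩ := (hBwd_iff e).1 heB
        rw [if_neg heF, if_pos heB, Finset.sum_eq_single i]
        · simp [hd, hi, hei.symm]
        · intro j _ hji
          have hj1 : e ≠ (p j.castSucc, p j.succ) := by
            intro h; exact hne j i (h.symm.trans hei.symm)
          have hj2 : e ≠ (p j.succ, p j.castSucc) := by
            intro h
            exact hji (hsc (congrArg Prod.fst (hei.trans h))).symm
          simp [hd, hj1, hj2]
        · simp
      · rw [if_neg heF, if_neg heB]
        apply Finset.sum_eq_zero
        intro i _
        cases hi : dir i with
        | true =>
          have h1 : e ≠ (p i.castSucc, p i.succ) := fun h => heF ((hFwd_iff e).2 ⟨i, hi, h.symm⟩)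
          simp [hd, hi, h1]
        | false =>
          have h1 : e ≠ (p i.succ, p i.castSucc) := fun h => heB ((hBwd_iff e).2 ⟨i, hi, h.symm⟩)
          simp [hd, hi, h1]
  have hFe'D : ∀ e, Fe' e = Fe e + ∑ i : Fin n, d i e := by
    intro e; rw [hFe' e, hD_eval e]; split_ifs <;> ring
  have hFe'1 : ∀ e ∈ T.edges, 1 ≤ Fe' e := by
    intro e he; rw [hFe' e]
    by_cases h1 : e ∈ Fwd
    · rw [if_pos h1]; have := hlb e h1; omega
    · rw [if_neg h1]
      by_cases hB : e ∈ Bwd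
      · rw [if_pos hB]; have := hFe1 e he; omega
      · rw [if_neg hB]; exact hFe1 e he
  have hmem_in : ∀ (v : V) (e : V × V), e ∈ T.incoming v ↔ e ∈ T.edges ∧ e.2 = v := by
    intro v e; exact Finset.mem_filter
  have hmem_out : ∀ (v : V) (e : V × V), e ∈ T.outgoing v ↔ e ∈ T.edges ∧ e.1 = v := by
    intro v e; exact Finset.mem_filter
  set DIN : V → ℤ := fun v => ∑ i : Fin n,
      (if dir i then (if p i.succ = v then -ε else 0)
       else (if p i.castSucc = v then ε else 0)) with hDIN
  set DOUT : V → ℤ := fun v => ∑ i : Fin n,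
      (if dir i then (if p i.castSucc = v then -ε else 0)
       else (if p i.succ = v then ε else 0)) with hDOUT
  have hin : ∀ v, ∑ e ∈ T.incoming v, Fe' e = (∑ e ∈ T.incoming v, Fe e) + DIN v := by
    intro v
    calc ∑ e ∈ T.incoming v, Fe' e
        = ∑ e ∈ T.incoming v, (Fe e + ∑ i : Fin n, d i e) :=
          Finset.sum_congr rfl (fun e _ => hFe'D e)
      _ = (∑ e ∈ T.incoming v, Fe e) + ∑ e ∈ T.incoming v, ∑ i : Fin n, d i e :=
          Finset.sum_add_distrib
      _ = (∑ e ∈ T.incoming v, Fe e) + DIN v := by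
          rw [Finset.sum_comm, hDIN]
          congr 1
          apply Finset.sum_congr rfl
          intro i _
          cases hi : dir i with
          | true =>
            have : ∀ e : V × V, d i e = if e = (p i.castSucc, p i.succ) then -ε else 0 := by
              intro e; simp [hd, hi]
            simp only [this, hi, if_true]
            rw [Finset.sum_ite_eq' (T.incoming v) (p i.castSucc, p i.succ) (fun _ => -ε)]
            by_cases hv : p i.succ = v
            · rw [if_pos ((hmem_in v _).2 ⟨hfwd_mem i hi, hv⟩), if_pos hv]
            · rw [if_neg (fun hm => hv ((hmem_in v _).1 hm).2), if_neg hv]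
          | false =>
            have : ∀ e : V × V, d i e = if e = (p i.succ, p i.castSucc) then ε else 0 := by
              intro e; simp [hd, hi]
            simp only [this, hi, Bool.false_eq_true, if_false]
            rw [Finset.sum_ite_eq' (T.incoming v) (p i.succ, p i.castSucc) (fun _ => ε)]
            by_cases hv : p i.castSucc = v
            · rw [if_pos ((hmem_in v _).2 ⟨hbwd_mem i hi, hv⟩), if_pos hv]
            · rw [if_neg (fun hm => hv ((hmem_in v _).1 hm).2), if_neg hv]
  have hout : ∀ v, ∑ e ∈ T.outgoing v, Fe' e = (∑ e ∈ T.outgoing v, Fe e) + DOUT v := by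
    intro v
    calc ∑ e ∈ T.outgoing v, Fe' e
        = ∑ e ∈ T.outgoing v, (Fe e + ∑ i : Fin n, d i e) :=
          Finset.sum_congr rfl (fun e _ => hFe'D e)
      _ = (∑ e ∈ T.outgoing v, Fe e) + ∑ e ∈ T.outgoing v, ∑ i : Fin n, d i e :=
          Finset.sum_add_distrib
      _ = (∑ e ∈ T.outgoing v, Fe e) + DOUT v := by
          rw [Finset.sum_comm, hDOUT]
          congr 1
          apply Finset.sum_congr rfl
          intro i _
          cases hi : dir i with
          | true =>
            have : ∀ e : V × V, d i e = if e = (p i.castSucc, p i.succ) then -ε else 0 := by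
              intro e; simp [hd, hi]
            simp only [this, hi, if_true]
            rw [Finset.sum_ite_eq' (T.outgoing v) (p i.castSucc, p i.succ) (fun _ => -ε)]
            by_cases hv : p i.castSucc = v
            · rw [if_pos ((hmem_out v _).2 ⟨hfwd_mem i hi, hv⟩), if_pos hv]
            · rw [if_neg (fun hm => hv ((hmem_out v _).1 hm).2), if_neg hv]
          | false =>
            have : ∀ e : V × V, d i e = if e = (p i.succ, p i.castSucc) then ε else 0 := by
              intro e; simp [hd, hi]
            simp only [this, hi, Bool.false_eq_true, if_false]
            rw [Finset.sum_ite_eq' (T.outgoing v) (p i.succ, p i.castSucc) (fun _ => ε)]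
            by_cases hv : p i.succ = v
            · rw [if_pos ((hmem_out v _).2 ⟨hbwd_mem i hi, hv⟩), if_pos hv]
            · rw [if_neg (fun hm => hv ((hmem_out v _).1 hm).2), if_neg hv]
  set dir' : ℕ → Bool := fun m => if h : m < n then dir ⟨m, h⟩ else true with hdir'def
  have hdir'_eq : ∀ i : Fin n, dir' (i : ℕ) = dir i := by
    intro i; simp [hdir'def]
  set a : ℕ → ℤ := fun m => if dir' m then -ε else 0 with ha
  set b : ℕ → ℤ := fun m => if dir' m then 0 else ε with hb
  have hab : ∀ m, a m - b m = -ε := by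
    intro m; cases h : dir' m <;> simp [ha, hb, h]
  have hDINp : ∀ k : Fin (n+1), DIN (p k) =
      (if 1 ≤ (k:ℕ) ∧ (k:ℕ) ≤ n then a ((k:ℕ) - 1) else 0)
        + (if (k:ℕ) < n then b (k:ℕ) else 0) := by
    intro k
    have step1 : DIN (p k) = ∑ i : Fin n,
        ((if (i:ℕ) + 1 = (k:ℕ) then a (i:ℕ) else 0)
          + (if (i:ℕ) = (k:ℕ) then b (i:ℕ) else 0)) := by
      rw [hDIN]
      apply Finset.sum_congr rfl
      intro i _
      have h1 : (p i.succ = p k) ↔ ((i:ℕ) + 1 = (k:ℕ)) := by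
        rw [hp.eq_iff, Fin.ext_iff, Fin.val_succ]
      have h2 : (p i.castSucc = p k) ↔ ((i:ℕ) = (k:ℕ)) := by
        rw [hp.eq_iff, Fin.ext_iff, Fin.coe_castSucc]
      cases hi : dir i with
      | true =>
        have hai : a (i:ℕ) = -ε := by rw [ha]; simp [hdir'_eq i, hi]
        have hbi : b (i:ℕ) = 0 := by rw [hb]; simp [hdir'_eq i, hi]
        simp [hi, h1, h2, hai, hbi]
      | false =>
        have hai : a (i:ℕ) = 0 := by rw [ha]; simp [hdir'_eq i, hi]
        have hbi : b (i:ℕ) = ε := by rw [hb]; simp [hdir'_eq i, hi]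
        simp [hi, h1, h2, hai, hbi]
    rw [step1, Finset.sum_add_distrib,
      Fin.sum_univ_eq_sum_range (fun m => if m + 1 = (k:ℕ) then a m else 0) n,
      Fin.sum_univ_eq_sum_range (fun m => if m = (k:ℕ) then b m else 0) n,
      sum_ite_succ_eq' n (k:ℕ) a, sum_ite_eq_nat' n (k:ℕ) b]
  have hDOUTp : ∀ k : Fin (n+1), DOUT (p k) =
      (if (k:ℕ) < n then a (k:ℕ) else 0)
        + (if 1 ≤ (k:ℕ) ∧ (k:ℕ) ≤ n then b ((k:ℕ) - 1) else 0) := by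
    intro k
    have step1 : DOUT (p k) = ∑ i : Fin n,
        ((if (i:ℕ) = (k:ℕ) then a (i:ℕ) else 0)
          + (if (i:ℕ) + 1 = (k:ℕ) then b (i:ℕ) else 0)) := by
      rw [hDOUT]
      apply Finset.sum_congr rfl
      intro i _
      have h1 : (p i.succ = p k) ↔ ((i:ℕ) + 1 = (k:ℕ)) := by
        rw [hp.eq_iff, Fin.ext_iff, Fin.val_succ]
      have h2 : (p i.castSucc = p k) ↔ ((i:ℕ) = (k:ℕ)) := by
        rw [hp.eq_iff, Fin.ext_iff, Fin.coe_castSucc]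
      cases hi : dir i with
      | true =>
        have hai : a (i:ℕ) = -ε := by rw [ha]; simp [hdir'_eq i, hi]
        have hbi : b (i:ℕ) = 0 := by rw [hb]; simp [hdir'_eq i, hi]
        simp [hi, h1, h2, hai, hbi]
      | false =>
        have hai : a (i:ℕ) = 0 := by rw [ha]; simp [hdir'_eq i, hi]
        have hbi : b (i:ℕ) = ε := by rw [hb]; simp [hdir'_eq i, hi]
        simp [hi, h1, h2, hai, hbi]
    rw [step1, Finset.sum_add_distrib,
      Fin.sum_univ_eq_sum_range (fun m => if m = (k:ℕ) then a m else 0) n,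
      Fin.sum_univ_eq_sum_range (fun m => if m + 1 = (k:ℕ) then b m else 0) n,
      sum_ite_succ_eq' n (k:ℕ) b, sum_ite_eq_nat' n (k:ℕ) a]
  have hDIN0 : ∀ v, (∀ k, p k ≠ v) → DIN v = 0 := by
    intro v hv
    rw [hDIN]
    apply Finset.sum_eq_zero
    intro i _
    simp [hv i.succ, hv i.castSucc]
  have hDOUT0 : ∀ v, (∀ k, p k ≠ v) → DOUT v = 0 := by
    intro v hv
    rw [hDOUT]
    apply Finset.sum_eq_zero
    intro i _
    simp [hv i.succ, hv i.castSucc]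
  have hDD : ∀ v, v ≠ p 0 → v ≠ p (Fin.last n) → DIN v = DOUT v := by
    intro v h0 hl
    by_cases hv : ∃ k, p k = v
    · obtain ⟨k, rfl⟩ := hv
      have hk0 : (k:ℕ) ≠ 0 := by
        intro h; exact h0 (congrArg p (Fin.ext h))
      have hkn : (k:ℕ) ≠ n := by
        intro h; exact hl (congrArg p (Fin.ext h))
      have hk1 : (k:ℕ) < n + 1 := k.isLt
      rw [hDINp k, hDOUTp k,
        if_pos (show 1 ≤ (k:ℕ) ∧ (k:ℕ) ≤ n by omega),
        if_pos (show (k:ℕ) < n by omega),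
        if_pos (show (k:ℕ) < n by omega),
        if_pos (show 1 ≤ (k:ℕ) ∧ (k:ℕ) ≤ n by omega)]
      have h1 := hab ((k:ℕ) - 1)
      have h2 := hab (k:ℕ)
      omega
    · push_neg at hv
      rw [hDIN0 v hv, hDOUT0 v hv]
  have hINnn : ∀ v, 0 ≤ ∑ e ∈ T.incoming v, Fe' e := by
    intro v
    apply Finset.sum_nonneg
    intro e he
    exact le_trans zero_le_one (hFe'1 e ((hmem_in v e).1 he).1)
  have hOUTnn : ∀ v, 0 ≤ ∑ e ∈ T.outgoing v, Fe' e := by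
    intro v
    apply Finset.sum_nonneg
    intro e he
    exact le_trans zero_le_one (hFe'1 e ((hmem_out v e).1 he).1)
  have hpos : ∀ (s : Finset (V × V)), s.Nonempty → (∀ e ∈ s, e ∈ T.edges) →
      1 ≤ ∑ e ∈ s, Fe' e := by
    intro s hs hsub
    calc (1:ℤ) ≤ ∑ _e ∈ s, (1:ℤ) := by
          rw [Finset.sum_const, nsmul_eq_mul, mul_one]
          exact_mod_cast hs.card_pos
      _ ≤ ∑ e ∈ s, Fe' e := Finset.sum_le_sum (fun e he => hFe'1 e (hsub e he))
  have hdeg : ∀ v, (T.incoming v).Nonempty ∨ (T.outgoing v).Nonempty := by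
    intro v
    have hconn := T.isTree.isConnected
    obtain ⟨w, hvw⟩ : ∃ w, v ≠ w := by
      by_cases h : v = p 0
      · refine ⟨p (Fin.last n), ?_⟩
        rw [h]
        intro hh
        have := congrArg Fin.val (hp hh)
        simp [Fin.last] at this
        omega
      · exact ⟨p 0, h⟩
    obtain ⟨q⟩ := hconn.preconnected v w
    cases q with
    | nil => exact absurd rfl hvw
    | cons hadj q' =>
      rw [SimpleGraph.fromRel_adj] at hadj
      obtain ⟨-, h1 | h1⟩ := hadj
      · right; exact ⟨_, (hmem_out v _).2 ⟨h1, rfl⟩⟩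
      · left; exact ⟨_, (hmem_in v _).2 ⟨h1, rfl⟩⟩
  have flow : T.IsFlow Fv' Fe' := by
    refine ⟨?_, hFe'1, ?_, ?_, ?_⟩
    · intro v
      rcases hdeg v with h | h
      · calc (1:ℤ) ≤ ∑ e ∈ T.incoming v, Fe' e :=
              hpos _ h (fun e he => ((hmem_in v e).1 he).1)
          _ ≤ Fv' v := by rw [hFv' v]; exact le_max_left _ _
      · calc (1:ℤ) ≤ ∑ e ∈ T.outgoing v, Fe' e :=
              hpos _ h (fun e he => ((hmem_out v e).1 he).1)
          _ ≤ Fv' v := by rw [hFv' v]; exact le_max_right _ _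
    · intro v hv
      have hv' : T.outgoing v = ∅ := hv
      rw [hFv' v, hv', Finset.sum_empty]
      exact max_eq_left (hINnn v)
    · intro v hv
      have hv' : T.incoming v = ∅ := hv
      rw [hFv' v, hv', Finset.sum_empty]
      exact max_eq_right (hOUTnn v)
    · intro v hvsrc hvsink
      have h0 : v ≠ p 0 := fun h => hvsrc (h ▸ hsrc)
      have hl : v ≠ p (Fin.last n) := fun h => hvsink (h ▸ hsink)
      obtain ⟨hIN, hOUT⟩ := hconsF v hvsrc hvsink
      have key : ∑ e ∈ T.incoming v, Fe' e = ∑ e ∈ T.outgoing v, Fe' e := by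
        rw [hin v, hout v, ← hIN, ← hOUT, hDD v h0 hl]
      constructor
      · rw [hFv' v, key, max_self]
      · rw [hFv' v, key, max_self]
  have hΔ : ∀ v, Fv' v = Fv v + (if v = p 0 then DOUT v else DIN v) := by
    intro v
    by_cases h0 : v = p 0
    · rw [if_pos h0]
      have hsrcv : T.IsSource v := by rw [h0]; exact hsrc
      have hin0 : T.incoming v = ∅ := hsrcv
      have hFveq : Fv' v = ∑ e ∈ T.outgoing v, Fe' e := by
        rw [hFv' v, hin0, Finset.sum_empty]
        exact max_eq_right (hOUTnn v)
      rw [hFveq, hout v, hsrcF v hsrcv]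
    · rw [if_neg h0]
      by_cases hsk : T.IsSink v
      · have hv' : T.outgoing v = ∅ := hsk
        have hFveq : Fv' v = ∑ e ∈ T.incoming v, Fe' e := by
          rw [hFv' v, hv', Finset.sum_empty]
          exact max_eq_left (hINnn v)
        rw [hFveq, hin v, hsinkF v hsk]
      · by_cases hsr : T.IsSource v
        · have hl : v ≠ p (Fin.last n) := by
            intro h
            rcases hdeg v with hne' | hne'
            · rw [show T.incoming v = ∅ from hsr] at hne'
              simp [Finset.not_nonempty_empty] at hne'
            · rw [h, show T.outgoing (p (Fin.last n)) = ∅ from hsink] at hne'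
              simp [Finset.not_nonempty_empty] at hne'
          have hv' : T.incoming v = ∅ := hsr
          have hFveq : Fv' v = ∑ e ∈ T.outgoing v, Fe' e := by
            rw [hFv' v, hv', Finset.sum_empty]
            exact max_eq_right (hOUTnn v)
          rw [hFveq, hout v, hsrcF v hsr, hDD v h0 hl]
        · have hl : v ≠ p (Fin.last n) := fun h => hsk (h ▸ hsink)
          obtain ⟨hIN, hOUT⟩ := hconsF v hsr hsk
          have key : ∑ e ∈ T.incoming v, Fe' e = ∑ e ∈ T.outgoing v, Fe' e := by
            rw [hin v, hout v, ← hIN, ← hOUT, hDD v h0 hl]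
          have hFveq : Fv' v = ∑ e ∈ T.incoming v, Fe' e := by
            rw [hFv' v, key, max_self]
          rw [hFveq, key, hout v, ← hOUT, ← hDD v h0 hl]
  have hsum_v : (∑ v, Fv' v) = (∑ v, Fv v)
      + ∑ k : Fin (n+1), (if p k = p 0 then DOUT (p k) else DIN (p k)) := by
    calc ∑ v, Fv' v = ∑ v, (Fv v + (if v = p 0 then DOUT v else DIN v)) :=
          Finset.sum_congr rfl (fun v _ => hΔ v)
      _ = (∑ v, Fv v) + ∑ v, (if v = p 0 then DOUT v else DIN v) :=
          Finset.sum_add_distrib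
      _ = (∑ v, Fv v) + ∑ k : Fin (n+1), (if p k = p 0 then DOUT (p k) else DIN (p k)) := by
          congr 1
          have h1 : ∀ v ∈ (Finset.univ : Finset V),
              v ∉ (Finset.univ : Finset (Fin (n+1))).image p →
              (if v = p 0 then DOUT v else DIN v) = 0 := by
            intro v _ hv
            have hnp : ∀ k, p k ≠ v := by
              intro k h
              exact hv (Finset.mem_image.2 ⟨k, Finset.mem_univ k, h⟩)
            rw [if_neg (fun h => (hnp 0) h.symm), hDIN0 v hnp]
          rw [← Finset.sum_subset (Finset.subset_univ _) h1,
            Finset.sum_image (fun x _ y _ h => hp h)]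
  have hterm : ∀ k : Fin (n+1), (if p k = p 0 then DOUT (p k) else DIN (p k))
      = (if (k:ℕ) = 0 then a 0 else
          ((if 1 ≤ (k:ℕ) ∧ (k:ℕ) ≤ n then a ((k:ℕ)-1) else 0)
            + (if (k:ℕ) < n then b (k:ℕ) else 0))) := by
    intro k
    by_cases hk : (k:ℕ) = 0
    · have hk' : k = 0 := Fin.ext (by simpa using hk)
      subst hk'
      rw [if_pos rfl, hDOUTp 0]
      simp [hn]
    · rw [if_neg (fun h => hk (by rw [show k = 0 from hp h]; rfl)), if_neg hk]
      exact hDINp k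
  have hgsum : (∑ k : Fin (n+1), (if p k = p 0 then DOUT (p k) else DIN (p k)))
      = (∑ m ∈ Finset.range n, (a m + b m)) - ε := by
    rw [Finset.sum_congr rfl (fun k _ => hterm k)]
    rw [Fin.sum_univ_eq_sum_range (fun K => if K = 0 then a 0 else
          ((if 1 ≤ K ∧ K ≤ n then a (K-1) else 0) + (if K < n then b K else 0))) (n+1)]
    rw [Finset.sum_range_succ']
    have e1 : ∀ K ∈ Finset.range n,
        (if K + 1 = 0 then a 0 else
          ((if 1 ≤ K + 1 ∧ K + 1 ≤ n then a (K+1-1) else 0)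
            + (if K + 1 < n then b (K+1) else 0)))
        = a K + (if K + 1 < n then b (K+1) else 0) := by
      intro K hK
      rw [Finset.mem_range] at hK
      rw [if_neg (by omega), if_pos (by omega), Nat.add_sub_cancel]
    rw [Finset.sum_congr rfl e1, Finset.sum_add_distrib]
    have e2 : (∑ K ∈ Finset.range n, (if K + 1 < n then b (K+1) else 0))
        = (∑ K ∈ Finset.range n, b K) - b 0 := by
      have e3 : (∑ K ∈ Finset.range n, (if K + 1 < n then b (K+1) else 0))
          = ∑ K ∈ Finset.range (n-1), (if K + 1 < n then b (K+1) else 0) := by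
        symm
        apply Finset.sum_subset
        · intro x hx
          rw [Finset.mem_range] at hx ⊢
          omega
        · intro x _ hx
          rw [Finset.mem_range] at hx
          rw [if_neg (by omega)]
      have e4 : ∑ K ∈ Finset.range (n-1), (if K + 1 < n then b (K+1) else 0)
          = ∑ K ∈ Finset.range (n-1), b (K+1) := by
        apply Finset.sum_congr rfl
        intro K hK
        rw [Finset.mem_range] at hK
        rw [if_pos (by omega)]
      have e5 : ∑ K ∈ Finset.range n, b K
          = (∑ K ∈ Finset.range (n-1), b (K+1)) + b 0 := by
        conv_lhs => rw [show n = (n-1) + 1 by omega]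
        exact Finset.sum_range_succ' b (n-1)
      rw [e3, e4]
      omega
    rw [e2, Finset.sum_add_distrib]
    have := hab 0
    simp at *
    omega
  have hsum_e : (∑ e ∈ T.edges, Fe' e)
      = (∑ e ∈ T.edges, Fe e) + ∑ m ∈ Finset.range n, (a m + b m) := by
    calc ∑ e ∈ T.edges, Fe' e
        = ∑ e ∈ T.edges, (Fe e + ∑ i : Fin n, d i e) :=
          Finset.sum_congr rfl (fun e _ => hFe'D e)
      _ = (∑ e ∈ T.edges, Fe e) + ∑ e ∈ T.edges, ∑ i : Fin n, d i e :=
          Finset.sum_add_distrib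
      _ = (∑ e ∈ T.edges, Fe e) + ∑ m ∈ Finset.range n, (a m + b m) := by
          congr 1
          rw [Finset.sum_comm,
            ← Fin.sum_univ_eq_sum_range (fun m => a m + b m) n]
          apply Finset.sum_congr rfl
          intro i _
          cases hi : dir i with
          | true =>
            have hai : a (i:ℕ) = -ε := by rw [ha]; simp [hdir'_eq i, hi]
            have hbi : b (i:ℕ) = 0 := by rw [hb]; simp [hdir'_eq i, hi]
            have : ∀ e : V × V, d i e = if e = (p i.castSucc, p i.succ) then -ε else 0 := by
              intro e; simp [hd, hi]
            rw [Finset.sum_congr rfl (fun e _ => this e),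
              Finset.sum_ite_eq' T.edges (p i.castSucc, p i.succ) (fun _ => -ε),
              if_pos (hfwd_mem i hi), hai, hbi, add_zero]
          | false =>
            have hai : a (i:ℕ) = 0 := by rw [ha]; simp [hdir'_eq i, hi]
            have hbi : b (i:ℕ) = ε := by rw [hb]; simp [hdir'_eq i, hi]
            have : ∀ e : V × V, d i e = if e = (p i.succ, p i.castSucc) then ε else 0 := by
              intro e; simp [hd, hi]
            rw [Finset.sum_congr rfl (fun e _ => this e),
              Finset.sum_ite_eq' T.edges (p i.succ, p i.castSucc) (fun _ => ε),
              if_pos (hbwd_mem i hi), hai, hbi, zero_add]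
  refine ⟨flow, ?_⟩
  rw [Ditree.netextent, Ditree.netextent, hsum_v, hgsum, hsum_e]
  ring
end

section
/- If λ ≥ 2 on all vertices and edges of a width tree (T, λ), then the labelling μ defined by μ(x) = 2λ(x)² − λ(x) is ≥ 1 everywhere and (T, μ) is a productless width tree. -/
open Finset

private lemma stmt16_sum_aux {ι : Type*} [DecidableEq ι] (s : Finset ι) (g : ι → ℤ)
    (h : ∀ i ∈ s, 0 ≤ g i) :
    ∑ i ∈ s, (2 * g i ^ 2 - g i) ≤ 2 * (∑ i ∈ s, g i) ^ 2 - ∑ i ∈ s, g i := by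
  induction s using Finset.cons_induction with
  | empty => simp
  | cons x s hx ih =>
    simp only [Finset.sum_cons]
    have hgx : 0 ≤ g x := h x (Finset.mem_cons_self _ _)
    have hsum : 0 ≤ ∑ i ∈ s, g i :=
      Finset.sum_nonneg fun i hi => h i (Finset.mem_cons_of_mem hi)
    have := ih fun i hi => h i (Finset.mem_cons_of_mem hi)
    nlinarith [mul_nonneg hgx hsum]

/-- if λ ≥ 2 on a productless width tree, then μ = 2λ² − λ is ≥ 1
everywhere and (T, μ) is a productless width tree. -/
theorem stmt16 {V : Type} [Fintype V] [DecidableEq V] (T : Ditree V)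
    (lv : V → ℤ) (le : V × V → ℤ)
    (hwt : T.IsWidthTree lv le)
    (h2v : ∀ v, 2 ≤ lv v) (h2e : ∀ e ∈ T.edges, 2 ≤ le e)
    (hprod : T.Productless lv le) :
    (∀ v, 1 ≤ 2 * lv v ^ 2 - lv v) ∧ (∀ e ∈ T.edges, 1 ≤ 2 * le e ^ 2 - le e) ∧
    T.IsWidthTree (fun v => 2 * lv v ^ 2 - lv v) (fun e => 2 * le e ^ 2 - le e) ∧
    T.Productless (fun v => 2 * lv v ^ 2 - lv v) (fun e => 2 * le e ^ 2 - le e) := by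
  obtain ⟨hv1, he1, hin, hout⟩ := hwt
  have hmuv : ∀ v, 1 ≤ 2 * lv v ^ 2 - lv v := fun v => by nlinarith [h2v v]
  have hmue : ∀ e ∈ T.edges, 1 ≤ 2 * le e ^ 2 - le e := fun e he => by nlinarith [h2e e he]
  -- edges in incoming/outgoing have nonneg labels
  have hincE : ∀ v, ∀ e ∈ T.incoming v, e ∈ T.edges := by
    intro v e he; exact (Finset.mem_filter.mp he).1
  have houtE : ∀ v, ∀ e ∈ T.outgoing v, e ∈ T.edges := by
    intro v e he; exact (Finset.mem_filter.mp he).1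
  have key : ∀ (S : Finset (V × V)), (∀ e ∈ S, e ∈ T.edges) →
      (∀ w, (∑ e ∈ S.filter (fun e => 0 ≤ le e), le e) ≤ lv w →
      (∑ e ∈ S.filter (fun e => 0 ≤ 2 * le e ^ 2 - le e), (2 * le e ^ 2 - le e))
        ≤ 2 * lv w ^ 2 - lv w) := by
    intro S hS w hle
    have hnn : ∀ e ∈ S, 0 ≤ le e := fun e he => by linarith [h2e e (hS e he)]
    have h1 : S.filter (fun e => 0 ≤ 2 * le e ^ 2 - le e) = S := by
      apply Finset.filter_true_of_mem
      intro e he; nlinarith [h2e e (hS e he)]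
    have h2 : S.filter (fun e => 0 ≤ le e) = S := Finset.filter_true_of_mem hnn
    rw [h1]; rw [h2] at hle
    have hsumnn : 0 ≤ ∑ e ∈ S, le e := Finset.sum_nonneg hnn
    have hs := stmt16_sum_aux S le hnn
    have hmono : 2 * (∑ e ∈ S, le e) ^ 2 - (∑ e ∈ S, le e) ≤ 2 * lv w ^ 2 - lv w := by
      nlinarith [h2v w]
    linarith
  have hinj : ∀ a b : ℤ, 2 ≤ a → 2 ≤ b → 2 * a ^ 2 - a = 2 * b ^ 2 - b → a = b := by
    intro a b ha hb h
    nlinarith [sq_nonneg (a - b)]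
  refine ⟨hmuv, hmue, ⟨fun v => by have := hmuv v; dsimp only; linarith,
    fun e he => by have := hmue e he; dsimp only; linarith, ?_, ?_⟩, ?_⟩
  · intro v; exact key (T.incoming v) (hincE v) v (hin v)
  · intro v; exact key (T.outgoing v) (houtE v) v (hout v)
  · intro e he
    obtain ⟨heE, hor⟩ := he
    apply hprod e
    refine ⟨heE, ?_⟩
    rcases hor with ⟨h1, h2⟩ | ⟨h1, h2⟩
    · exact Or.inl ⟨h1, hinj _ _ (h2e e heE) (h2v e.2) h2⟩
    · exact Or.inr ⟨h1, hinj _ _ (h2e e heE) (h2v e.1) h2⟩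
end

section
/- Suppose T is a finite ditree and F, F' are flows on T with F'(e) ≤ F(e) for every edge e. If S is a strong source-sink cut such that F'(e) = 1 for every edge e with tail in S and head outside S, then netextent(T, F') = val(F', S) = |∂S|, |∂S| equals the maximum of |∂S'| over all strong source-sink cuts S', and netextent(T, F') ≤ netextent(T, G) for every flow G on T. -/
open Finset

section Aux

variable {V : Type} [Fintype V] [DecidableEq V] (T : Ditree V)

lemma aux_sum_outgoing (Ge : V × V → ℤ) (W : Finset V) :
    ∑ v ∈ W, ∑ e ∈ T.outgoing v, Ge e
      = ∑ e ∈ T.edges.filter (fun e => e.1 ∈ W), Ge e := by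
  rw [← Finset.sum_fiberwise_of_maps_to (g := Prod.fst)
    (fun e he => (Finset.mem_filter.mp he).2) Ge]
  refine Finset.sum_congr rfl fun v hv => ?_
  congr 1
  rw [Finset.filter_filter]
  unfold Ditree.outgoing
  apply Finset.filter_congr
  intro e _
  constructor
  · exact fun h => ⟨h ▸ hv, h⟩
  · exact fun h => h.2

lemma aux_sum_incoming (Ge : V × V → ℤ) (W : Finset V) :
    ∑ v ∈ W, ∑ e ∈ T.incoming v, Ge e
      = ∑ e ∈ T.edges.filter (fun e => e.2 ∈ W), Ge e := by
  rw [← Finset.sum_fiberwise_of_maps_to (g := Prod.snd)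
    (fun e he => (Finset.mem_filter.mp he).2) Ge]
  refine Finset.sum_congr rfl fun v hv => ?_
  congr 1
  rw [Finset.filter_filter]
  unfold Ditree.incoming
  apply Finset.filter_congr
  intro e _
  constructor
  · exact fun h => ⟨h ▸ hv, h⟩
  · exact fun h => h.2

lemma aux_netextent_eq {Gv : V → ℤ} {Ge : V × V → ℤ} (hG : T.IsFlow Gv Ge)
    {S : Finset V} (hS : T.IsCut S) :
    T.netextent Gv Ge = T.flowVal Ge S := by
  obtain ⟨_, _, hsink, hsource, hmid⟩ := hG
  obtain ⟨hsrc, hsnk, hcut⟩ := hS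
  have hv_in : ∀ v ∈ S, Gv v = ∑ e ∈ T.outgoing v, Ge e := by
    intro v hv
    by_cases h : T.IsSource v
    · exact hsource v h
    · exact (hmid v h (hsnk v hv)).2
  have hv_out : ∀ v ∈ Sᶜ, Gv v = ∑ e ∈ T.incoming v, Ge e := by
    intro v hv
    rw [Finset.mem_compl] at hv
    by_cases h : T.IsSink v
    · exact hsink v h
    · exact (hmid v (fun hs => hv (hsrc v hs)) h).1
  unfold Ditree.netextent Ditree.flowVal Ditree.cutEdges
  rw [← Finset.sum_add_sum_compl S Gv,
    Finset.sum_congr rfl hv_in, Finset.sum_congr rfl hv_out,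
    aux_sum_outgoing, aux_sum_incoming]
  -- notation
  set D := ∑ e ∈ T.edges.filter (fun e => e.1 ∈ S ∧ e.2 ∉ S), Ge e with hD
  have splitA : ∑ e ∈ T.edges.filter (fun e => e.1 ∈ S), Ge e
      = D + ∑ e ∈ T.edges.filter (fun e => e.1 ∈ S ∧ ¬ e.2 ∉ S), Ge e := by
    rw [← Finset.sum_filter_add_sum_filter_not
      (T.edges.filter (fun e => e.1 ∈ S)) (fun e => e.2 ∉ S) Ge,
      Finset.filter_filter, Finset.filter_filter]
  have splitB : ∑ e ∈ T.edges.filter (fun e => e.2 ∈ Sᶜ), Ge e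
      = D + ∑ e ∈ T.edges.filter (fun e => e.1 ∉ S), Ge e := by
    rw [← Finset.sum_filter_add_sum_filter_not
      (T.edges.filter (fun e => e.2 ∈ Sᶜ)) (fun e => e.1 ∈ S) Ge,
      Finset.filter_filter, Finset.filter_filter]
    congr 1
    · apply Finset.sum_congr _ (fun _ _ => rfl)
      apply Finset.filter_congr
      intro e _
      simp only [Finset.mem_compl]
      tauto
    · apply Finset.sum_congr _ (fun _ _ => rfl)
      apply Finset.filter_congr
      intro e he
      simp only [Finset.mem_compl]
      constructor
      · exact fun h => h.2
      · intro h
        exact ⟨fun h2 => h (hcut e he h2), h⟩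
  have splitC : ∑ e ∈ T.edges, Ge e
      = ∑ e ∈ T.edges.filter (fun e => e.1 ∈ S), Ge e
        + ∑ e ∈ T.edges.filter (fun e => e.1 ∉ S), Ge e := by
    rw [Finset.sum_filter_add_sum_filter_not]
  rw [splitA, splitB, splitC, splitA]
  ring

lemma aux_flowVal_ge {Gv : V → ℤ} {Ge : V × V → ℤ} (hG : T.IsFlow Gv Ge)
    (S' : Finset V) : (T.cutSize S' : ℤ) ≤ T.flowVal Ge S' := by
  unfold Ditree.cutSize Ditree.flowVal
  rw [Finset.card_eq_sum_ones]
  push_cast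
  apply Finset.sum_le_sum
  intro e he
  exact hG.2.1 e (Finset.mem_filter.mp he).1

end Aux

/-- if F' ≤ F are flows and S is a strong source-sink cut all of whose
crossing edges carry F'-value 1, then netextent(T, F') = |∂S|, S has maximal cut size,
and F' has minimal net extent among all flows. -/
theorem stmt19 {V : Type} [Fintype V] [DecidableEq V] (T : Ditree V)
    (Fv Fv' : V → ℤ) (Fe Fe' : V × V → ℤ)
    (hF : T.IsFlow Fv Fe) (hF' : T.IsFlow Fv' Fe')
    (hle : ∀ e ∈ T.edges, Fe' e ≤ Fe e)
    (S : Finset V) (hS : T.IsCut S)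
    (h1 : ∀ e ∈ T.cutEdges S, Fe' e = 1) :
    T.netextent Fv' Fe' = T.cutSize S ∧
    (∀ S' : Finset V, T.IsCut S' → T.cutSize S' ≤ T.cutSize S) ∧
    (∀ (Gv : V → ℤ) (Ge : V × V → ℤ), T.IsFlow Gv Ge →
      T.netextent Fv' Fe' ≤ T.netextent Gv Ge) := by
  have hNE' : T.netextent Fv' Fe' = T.flowVal Fe' S := aux_netextent_eq T hF' hS
  have hval : T.flowVal Fe' S = (T.cutSize S : ℤ) := by
    unfold Ditree.flowVal Ditree.cutSize
    rw [Finset.sum_congr rfl h1]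
    simp
  have hmain : T.netextent Fv' Fe' = (T.cutSize S : ℤ) := hNE'.trans hval
  refine ⟨hmain, ?_, ?_⟩
  · intro S' hS'
    have h2 : (T.cutSize S' : ℤ) ≤ T.flowVal Fe' S' := aux_flowVal_ge T hF' S'
    have h3 : T.netextent Fv' Fe' = T.flowVal Fe' S' := aux_netextent_eq T hF' hS'
    have : (T.cutSize S' : ℤ) ≤ (T.cutSize S : ℤ) := by
      rw [← hmain, h3]; exact h2
    exact_mod_cast this
  · intro Gv Ge hG
    have h2 : (T.cutSize S : ℤ) ≤ T.flowVal Ge S := aux_flowVal_ge T hG S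
    have h3 : T.netextent Gv Ge = T.flowVal Ge S := aux_netextent_eq T hG hS
    rw [hmain, h3]
    exact h2
end
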